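/- arXiv:1907.01127 — 9 statements merged into one kernel-verified Lean document; each statement's English description precedes it below -/
import Mathlib

section
/- Let Γ_{ij} ∈ ℝ^{d×d} have strictly positive entries and Γ_i ∈ ℝ^d have strictly positive entries. Over all pairs (A,v) with A ∈ ℝ^{d×d}_{≥0}, v ∈ ℝ^d_{≥0}, and A𝟙 = v, the quantity D_Φ(A,Γ_{ij}) + D_Φ(v,Γ_i) is uniquely minimized at A'(x_i,x_j) = Γ_{ij}(x_i,x_j)·√(Γ_i(x_i)/Σ_x Γ_{ij}(x_i,x)) and v'(x_i) = Γ_i(x_i)·√(Σ_x Γ_{ij}(x_i,x)/Γ_i(x_i)). -/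
noncomputable section

/-- Bregman divergence (negative entropy) between two vectors in `ℝ^d_{≥0}`,
the second having strictly positive entries; `0 log 0 = 0`. -/
def bregV {d : ℕ} (p q : Fin d → ℝ) : ℝ :=
  ∑ x, (p x * Real.log (p x / q x) - p x + q x)

/-- Bregman divergence (negative entropy) between two matrices, read
entrywise. -/
def bregM {d : ℕ} (P Q : Fin d → Fin d → ℝ) : ℝ :=
  ∑ x, ∑ y, (P x y * Real.log (P x y / Q x y) - P x y + Q x y)

/-!
The divergence obeys a three-point identity: for a fixed base point `R`,
`D(P, Q) = D(P, R) + ⟨P, log (R / Q)⟩ + (terms not involving P)`.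
For the claimed projection, `log (A' / Γij) = c x` and `log (v' / Γi) = -c x` on row `x`,
where `c x = log √(Γi x / ∑ z, Γij x z)`, so on the constraint set `A𝟙 = v` the linear terms
cancel and the objective equals `D(A, A') + D(v, v')` plus a constant. That remainder is
nonnegative and vanishes only at `(A', v')`.
-/

open Real InformationTheory

lemma mul_log_div_sub_add_eq_mul_klFun (p : ℝ) {q : ℝ} (hq : q ≠ 0) :
    p * log (p / q) - p + q = q * klFun (p / q) := by
  rw [klFun_apply]; field_simp; ring

lemma mul_log_div_sub_add_nonneg {p q : ℝ} (hp : 0 ≤ p) (hq : 0 < q) :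
    0 ≤ p * log (p / q) - p + q := by
  rw [mul_log_div_sub_add_eq_mul_klFun p hq.ne']
  exact mul_nonneg hq.le (klFun_nonneg (by positivity))

lemma mul_log_div_sub_add_pos {p q : ℝ} (hp : 0 ≤ p) (hq : 0 < q) (hpq : p ≠ q) :
    0 < p * log (p / q) - p + q := by
  rw [mul_log_div_sub_add_eq_mul_klFun p hq.ne']
  refine mul_pos hq (lt_of_le_of_ne (klFun_nonneg (by positivity)) (Ne.symm ?_))
  rwa [Ne, klFun_eq_zero_iff (by positivity), div_eq_one_iff_eq hq.ne']

lemma mul_log_div_sub_add_eq_add {p q r : ℝ} (hp : 0 ≤ p) (hq : 0 < q) (hr : 0 < r) :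
    p * log (p / q) - p + q = (p * log (p / r) - p + r) + p * log (r / q) + (q - r) := by
  rcases hp.eq_or_lt with rfl | hp
  · ring
  · rw [show p / q = p / r * (r / q) by field_simp, log_mul (by positivity) (by positivity)]
    ring

lemma mul_sqrt_div_eq_sqrt_mul {a b : ℝ} (hb : 0 ≤ b) : b * √(a / b) = √(a * b) := by
  rw [← sqrt_sq hb, ← sqrt_mul (sq_nonneg b), sqrt_sq hb]
  rcases eq_or_ne b 0 with rfl | hb
  · simp
  · congr 1; field_simp

section Divergence

variable {d : ℕ}

@[simp]
lemma bregV_self (p : Fin d → ℝ) : bregV p p = 0 := by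
  simp only [bregV]
  refine Finset.sum_eq_zero fun x _ => ?_
  rcases eq_or_ne (p x) 0 with h | h <;> simp [h]

lemma bregV_nonneg {p q : Fin d → ℝ} (hp : ∀ x, 0 ≤ p x) (hq : ∀ x, 0 < q x) :
    0 ≤ bregV p q :=
  Finset.sum_nonneg fun x _ => mul_log_div_sub_add_nonneg (hp x) (hq x)

lemma bregV_pos {p q : Fin d → ℝ} (hp : ∀ x, 0 ≤ p x) (hq : ∀ x, 0 < q x) (hpq : p ≠ q) :
    0 < bregV p q := by
  obtain ⟨x, hx⟩ := Function.ne_iff.1 hpq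
  exact Finset.sum_pos' (fun x _ => mul_log_div_sub_add_nonneg (hp x) (hq x))
    ⟨x, Finset.mem_univ x, mul_log_div_sub_add_pos (hp x) (hq x) hx⟩

lemma bregV_eq_bregV_add {p q r : Fin d → ℝ} (hp : ∀ x, 0 ≤ p x) (hq : ∀ x, 0 < q x)
    (hr : ∀ x, 0 < r x) :
    bregV p q = bregV p r + ∑ x, p x * log (r x / q x) + ∑ x, (q x - r x) := by
  simp only [bregV, ← Finset.sum_add_distrib]
  exact Finset.sum_congr rfl fun x _ => mul_log_div_sub_add_eq_add (hp x) (hq x) (hr x)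

lemma bregM_eq_sum_bregV (P Q : Fin d → Fin d → ℝ) : bregM P Q = ∑ x, bregV (P x) (Q x) :=
  rfl

@[simp]
lemma bregM_self (P : Fin d → Fin d → ℝ) : bregM P P = 0 := by
  simp [bregM_eq_sum_bregV]

lemma bregM_nonneg {P Q : Fin d → Fin d → ℝ} (hP : ∀ x y, 0 ≤ P x y) (hQ : ∀ x y, 0 < Q x y) :
    0 ≤ bregM P Q :=
  Finset.sum_nonneg fun x _ => bregV_nonneg (hP x) (hQ x)

lemma bregM_pos {P Q : Fin d → Fin d → ℝ} (hP : ∀ x y, 0 ≤ P x y) (hQ : ∀ x y, 0 < Q x y)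
    (hPQ : P ≠ Q) : 0 < bregM P Q := by
  obtain ⟨x, hx⟩ := Function.ne_iff.1 hPQ
  exact Finset.sum_pos' (fun x _ => bregV_nonneg (hP x) (hQ x))
    ⟨x, Finset.mem_univ x, bregV_pos (hP x) (hQ x) hx⟩

lemma bregM_eq_bregM_add_of_log_div_eq {P Q R : Fin d → Fin d → ℝ} {c : Fin d → ℝ}
    (hP : ∀ x y, 0 ≤ P x y) (hQ : ∀ x y, 0 < Q x y) (hR : ∀ x y, 0 < R x y)
    (hc : ∀ x y, log (R x y / Q x y) = c x) :
    bregM P Q = bregM P R + ∑ x, (∑ y, P x y) * c x + ∑ x, ∑ y, (Q x y - R x y) := by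
  simp only [bregM_eq_sum_bregV, ← Finset.sum_add_distrib]
  refine Finset.sum_congr rfl fun x _ => ?_
  simp only [bregV_eq_bregV_add (hP x) (hQ x) (hR x), hc, Finset.sum_mul]

lemma bregM_add_bregV_eq_of_row_sum_eq {A A' Γij : Fin d → Fin d → ℝ} {v v' Γi : Fin d → ℝ}
    {c : Fin d → ℝ} (hA : ∀ x y, 0 ≤ A x y) (hv : ∀ x, 0 ≤ v x) (hrow : ∀ x, ∑ y, A x y = v x)
    (hΓij : ∀ x y, 0 < Γij x y) (hΓi : ∀ x, 0 < Γi x)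
    (hA' : ∀ x y, 0 < A' x y) (hv' : ∀ x, 0 < v' x)
    (hcA : ∀ x y, log (A' x y / Γij x y) = c x) (hcv : ∀ x, log (v' x / Γi x) = -c x) :
    bregM A Γij + bregV v Γi =
      bregM A A' + bregV v v' + (∑ x, ∑ y, (Γij x y - A' x y) + ∑ x, (Γi x - v' x)) := by
  have hcancel : ∑ x, (∑ y, A x y) * c x + ∑ x, v x * log (v' x / Γi x) = 0 := by
    simp only [hrow, hcv, ← Finset.sum_add_distrib, mul_neg, add_neg_cancel,
      Finset.sum_const_zero]
  rw [bregM_eq_bregM_add_of_log_div_eq hA hΓij hA' hcA, bregV_eq_bregV_add hv hΓi hv']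
  linear_combination hcancel

lemma bregM_add_bregV_lt_of_log_div_eq {A A' Γij : Fin d → Fin d → ℝ} {v v' Γi : Fin d → ℝ}
    {c : Fin d → ℝ} (hΓij : ∀ x y, 0 < Γij x y) (hΓi : ∀ x, 0 < Γi x)
    (hA' : ∀ x y, 0 < A' x y) (hv' : ∀ x, 0 < v' x) (hrow' : ∀ x, ∑ y, A' x y = v' x)
    (hcA : ∀ x y, log (A' x y / Γij x y) = c x) (hcv : ∀ x, log (v' x / Γi x) = -c x)
    (hA : ∀ x y, 0 ≤ A x y) (hv : ∀ x, 0 ≤ v x) (hrow : ∀ x, ∑ y, A x y = v x)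
    (hne : (A, v) ≠ (A', v')) :
    bregM A' Γij + bregV v' Γi < bregM A Γij + bregV v Γi := by
  have hpyth := bregM_add_bregV_eq_of_row_sum_eq hA hv hrow hΓij hΓi hA' hv' hcA hcv
  have hpyth' := bregM_add_bregV_eq_of_row_sum_eq (fun x y => (hA' x y).le)
    (fun x => (hv' x).le) hrow' hΓij hΓi hA' hv' hcA hcv
  rw [bregM_self, bregV_self, zero_add, zero_add] at hpyth'
  have hgap : 0 < bregM A A' + bregV v v' := by
    rw [Ne, Prod.mk_inj, not_and_or] at hne
    rcases hne with hAA' | hvv'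
    · exact add_pos_of_pos_of_nonneg (bregM_pos hA hA' hAA') (bregV_nonneg hv hv')
    · exact add_pos_of_nonneg_of_pos (bregM_nonneg hA hA') (bregV_pos hv hv' hvv')
  linarith

end Divergence

theorem stmt_3_general {d : ℕ}
    (Γij : Fin d → Fin d → ℝ) (Γi : Fin d → ℝ)
    (hΓij : ∀ x y, 0 < Γij x y) (hΓi : ∀ x, 0 < Γi x)
    (A' : Fin d → Fin d → ℝ) (v' : Fin d → ℝ)
    (hA' : ∀ x y, A' x y = Γij x y * Real.sqrt (Γi x / ∑ z, Γij x z))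
    (hv' : ∀ x, v' x = Γi x * Real.sqrt ((∑ z, Γij x z) / Γi x)) :
    (∀ x y, 0 ≤ A' x y) ∧ (∀ x, 0 ≤ v' x) ∧ (∀ x, ∑ y, A' x y = v' x) ∧
    ∀ A : Fin d → Fin d → ℝ, ∀ v : Fin d → ℝ,
      (∀ x y, 0 ≤ A x y) → (∀ x, 0 ≤ v x) → (∀ x, ∑ y, A x y = v x) →
      (A, v) ≠ (A', v') →
      bregM A' Γij + bregV v' Γi < bregM A Γij + bregV v Γi := by
  have hs : ∀ x, 0 < ∑ z, Γij x z := fun x =>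
    Finset.sum_pos (fun z _ => hΓij x z) ⟨x, Finset.mem_univ x⟩
  have hA'pos : ∀ x y, 0 < A' x y := fun x y => by
    rw [hA']; exact mul_pos (hΓij x y) (sqrt_pos.2 (div_pos (hΓi x) (hs x)))
  have hv'pos : ∀ x, 0 < v' x := fun x => by
    rw [hv']; exact mul_pos (hΓi x) (sqrt_pos.2 (div_pos (hs x) (hΓi x)))
  have hrow' : ∀ x, ∑ y, A' x y = v' x := fun x => by
    rw [hv', mul_sqrt_div_eq_sqrt_mul (hΓi x).le, mul_comm (∑ z, Γij x z),
      ← mul_sqrt_div_eq_sqrt_mul (hs x).le, Finset.sum_mul]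
    exact Finset.sum_congr rfl fun y _ => hA' x y
  have hcA : ∀ x y, log (A' x y / Γij x y) = log √(Γi x / ∑ z, Γij x z) := fun x y => by
    rw [hA', mul_div_cancel_left₀ _ (hΓij x y).ne']
  have hcv : ∀ x, log (v' x / Γi x) = -log √(Γi x / ∑ z, Γij x z) := fun x => by
    rw [hv', mul_div_cancel_left₀ _ (hΓi x).ne', ← inv_div, sqrt_inv, log_inv]
  exact ⟨fun x y => (hA'pos x y).le, fun x => (hv'pos x).le, hrow',
    fun A v hA hv hrow hne => bregM_add_bregV_lt_of_log_div_eq hΓij hΓi hA'pos hv'pos hrow'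
      hcA hcv hA hv hrow hne⟩

/-- The Bregman projection enforcing the row-consistency
constraint `A𝟙 = v` has the stated closed form, and it is the unique
minimizer. -/
theorem stmt_3 {d : ℕ} (hd : 1 ≤ d)
    (Γij : Fin d → Fin d → ℝ) (Γi : Fin d → ℝ)
    (hΓij : ∀ x y, 0 < Γij x y) (hΓi : ∀ x, 0 < Γi x)
    (A' : Fin d → Fin d → ℝ) (v' : Fin d → ℝ)
    (hA' : ∀ x y, A' x y = Γij x y * Real.sqrt (Γi x / ∑ z, Γij x z))
    (hv' : ∀ x, v' x = Γi x * Real.sqrt ((∑ z, Γij x z) / Γi x)) :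
    (∀ x y, 0 ≤ A' x y) ∧ (∀ x, 0 ≤ v' x) ∧ (∀ x, ∑ y, A' x y = v' x) ∧
    ∀ A : Fin d → Fin d → ℝ, ∀ v : Fin d → ℝ,
      (∀ x y, 0 ≤ A x y) → (∀ x, 0 ≤ v x) → (∀ x, ∑ y, A x y = v x) →
      (A, v) ≠ (A', v') →
      bregM A' Γij + bregV v' Γi < bregM A Γij + bregV v Γi :=
  stmt_3_general Γij Γi hΓij hΓi A' v' hA' hv'
end
end

section
/- Fix dual variables (λ,ξ) with associated primal variables Γ as in the context, fix an edge ij∈E with j∈N_r(i) (so the constraint at i applies to the rows of Γ_{ij}), and let λ' agree with λ except that λ'_{ij}(x) = λ_{ij}(x) + α*(x) for all x∈χ, where α*(x) = (1/2)·log((Γ_{ij}𝟙)(x)/Γ_i(x)). Then L(λ',ξ) − L(λ,ξ) = 2h²(Γ_{ij}𝟙, Γ_i). -/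
noncomputable section

/-- Primal edge variable `Γ_{ij}(x_i,x_j)` determined by the dual variables. -/
def pEdge {V : Type} {d : ℕ} (η : ℝ) (Ce : V × V → Fin d → Fin d → ℝ)
    (lr lc : V × V → Fin d → ℝ) (xie : V × V → ℝ) (e : V × V) (x y : Fin d) : ℝ :=
  Real.exp (-(η * Ce e x y) - lr e x - lc e y - xie e)

/-- Primal vertex variable `Γ_i(x)` determined by the dual variables.  For an
edge `e = (i,j) ∈ E`, the dual `lr e` constrains the rows of `Γ_e` at `i = e.1`
(`j ∈ N_r(i)`) and `lc e` constrains the columns of `Γ_e` at `j = e.2`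
(`i ∈ N_c(j)`). -/
def pVtx {V : Type} [Fintype V] [DecidableEq V] {d : ℕ} (E : Finset (V × V))
    (η : ℝ) (Cv : V → Fin d → ℝ) (lr lc : V × V → Fin d → ℝ) (xiv : V → ℝ)
    (i : V) (x : Fin d) : ℝ :=
  Real.exp (-(η * Cv i x) - xiv i +
    (∑ e ∈ E.filter (fun e => e.1 = i), lr e x) +
    ∑ e ∈ E.filter (fun e => e.2 = i), lc e x)

/-- The Lyapunov function `L(λ, ξ)`. -/
def Lyap {V : Type} [Fintype V] [DecidableEq V] {d : ℕ} (E : Finset (V × V))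
    (η : ℝ) (Cv : V → Fin d → ℝ) (Ce : V × V → Fin d → Fin d → ℝ)
    (lr lc : V × V → Fin d → ℝ) (xie : V × V → ℝ) (xiv : V → ℝ) : ℝ :=
  -(∑ e ∈ E, ∑ x : Fin d, ∑ y : Fin d, pEdge η Ce lr lc xie e x y)
  - (∑ i : V, ∑ x : Fin d, pVtx E η Cv lr lc xiv i x)
  - (∑ e ∈ E, xie e) - (∑ i : V, xiv i)
  + (∑ e ∈ E, ∑ x : Fin d, ∑ y : Fin d, Real.exp (-(η * Ce e x y)))
  + ∑ i : V, ∑ x : Fin d, Real.exp (-(η * Cv i x))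

/-- Squared Hellinger distance of two nonnegative vectors. -/
def hell2 {d : ℕ} (p q : Fin d → ℝ) : ℝ :=
  (1 / 2) * ∑ x, (Real.sqrt (p x) - Real.sqrt (q x)) ^ 2

/-!
Only `Γ_{ij}` and `Γ_i` depend on `λ_{ij}`: the update scales the row `x` of `Γ_{ij}` by
`exp (-α*(x))` and `Γ_i(x)` by `exp α*(x)`. With `a = (Γ_{ij}𝟙)(x)` and `b = Γ_i(x)`, the choice
`α*(x) = ½ log (a / b)` makes both rescaled masses equal to `√(ab)`, so the mass removed at `x`
is `a + b - 2√(ab) = (√a - √b)²`.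
-/

open Finset Real

lemma mul_exp_half_log_div {a b : ℝ} (ha : 0 < a) (hb : 0 < b) :
    b * exp (1 / 2 * log (a / b)) = √(a * b) := by
  have hexp : exp (1 / 2 * log (a / b)) = √(a / b) := by
    rw [sqrt_eq_rpow, rpow_def_of_pos (div_pos ha hb), mul_comm]
  rw [hexp, ← sqrt_sq hb.le, ← sqrt_mul (sq_nonneg b), sqrt_sq hb.le]
  congr 1
  field_simp

lemma mul_one_sub_exp_neg_add_mul_one_sub_exp {a b α : ℝ} (ha : 0 < a) (hb : 0 < b)
    (hα : α = 1 / 2 * log (a / b)) :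
    a * (1 - exp (-α)) + b * (1 - exp α) = (√a - √b) ^ 2 := by
  have hneg : -α = 1 / 2 * log (b / a) := by
    rw [hα, show b / a = (a / b)⁻¹ from (inv_div a b).symm, log_inv]
    ring
  have hb' : b * exp α = √(a * b) := hα ▸ mul_exp_half_log_div ha hb
  have ha' : a * exp (-α) = √(a * b) := by
    rw [hneg, mul_comm a b]
    exact mul_exp_half_log_div hb ha
  rw [sqrt_mul ha.le] at ha' hb'
  have hsa := sq_sqrt ha.le
  have hsb := sq_sqrt hb.le
  linear_combination -ha' - hb' - hsa - hsb

lemma update_add_apply {ι κ : Type*} [DecidableEq ι] (f : ι → κ → ℝ) (i : ι) (g : κ → ℝ)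
    (j : ι) (x : κ) :
    Function.update f i (fun x => f i x + g x) j x = f j x + if j = i then g x else 0 := by
  by_cases h : j = i
  · subst h; simp
  · simp [h]

section DualUpdate

variable {V : Type} [DecidableEq V] {d : ℕ} (E : Finset (V × V)) (η : ℝ)
  (Cv : V → Fin d → ℝ) (Ce : V × V → Fin d → Fin d → ℝ) (lr lc : V × V → Fin d → ℝ)
  (xie : V × V → ℝ) (xiv : V → ℝ)

lemma pEdge_update_of_ne {e₀ e : V × V} (g : Fin d → ℝ) (he : e ≠ e₀) (x y : Fin d) :
    pEdge η Ce (Function.update lr e₀ g) lc xie e x y = pEdge η Ce lr lc xie e x y := by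
  simp only [pEdge, Function.update_of_ne he]

lemma pEdge_update_add_self (e₀ : V × V) (α : Fin d → ℝ) (x y : Fin d) :
    pEdge η Ce (Function.update lr e₀ (fun x => lr e₀ x + α x)) lc xie e₀ x y =
      pEdge η Ce lr lc xie e₀ x y * exp (-α x) := by
  simp only [pEdge, Function.update_self, ← exp_add]
  ring_nf

lemma sum_pEdge_sub_update_add {e₀ : V × V} (he₀ : e₀ ∈ E) (α : Fin d → ℝ) :
    ∑ e ∈ E, ∑ x, ∑ y, (pEdge η Ce lr lc xie e x y -
        pEdge η Ce (Function.update lr e₀ (fun x => lr e₀ x + α x)) lc xie e x y) =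
      ∑ x, (∑ y, pEdge η Ce lr lc xie e₀ x y) * (1 - exp (-α x)) := by
  rw [sum_eq_single_of_mem e₀ he₀ fun e _ he => by
    simp only [pEdge_update_of_ne _ _ _ _ _ _ he, sub_self, sum_const_zero]]
  simp only [pEdge_update_add_self, ← mul_one_sub, sum_mul]

variable [Fintype V]

lemma Lyap_sub_Lyap (lr' : V × V → Fin d → ℝ) :
    Lyap E η Cv Ce lr' lc xie xiv - Lyap E η Cv Ce lr lc xie xiv =
      (∑ e ∈ E, ∑ x, ∑ y, (pEdge η Ce lr lc xie e x y - pEdge η Ce lr' lc xie e x y)) +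
        ∑ i, ∑ x, (pVtx E η Cv lr lc xiv i x - pVtx E η Cv lr' lc xiv i x) := by
  simp only [Lyap, sum_sub_distrib]
  ring

lemma pVtx_update_of_ne {e₀ : V × V} {i : V} (g : Fin d → ℝ) (hi : i ≠ e₀.1) (x : Fin d) :
    pVtx E η Cv (Function.update lr e₀ g) lc xiv i x = pVtx E η Cv lr lc xiv i x := by
  have hrow : ∑ e ∈ E.filter (fun e => e.1 = i), Function.update lr e₀ g e x =
      ∑ e ∈ E.filter (fun e => e.1 = i), lr e x := by
    refine sum_congr rfl fun e he => ?_
    have hne : e ≠ e₀ := by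
      rintro rfl
      exact hi (mem_filter.mp he).2.symm
    rw [Function.update_of_ne hne]
  simp only [pVtx, hrow]

lemma pVtx_update_add_self {e₀ : V × V} (he₀ : e₀ ∈ E) (α : Fin d → ℝ) (x : Fin d) :
    pVtx E η Cv (Function.update lr e₀ (fun x => lr e₀ x + α x)) lc xiv e₀.1 x =
      pVtx E η Cv lr lc xiv e₀.1 x * exp (α x) := by
  have hrow : ∑ e ∈ E.filter (fun e => e.1 = e₀.1),
      Function.update lr e₀ (fun x => lr e₀ x + α x) e x =
      (∑ e ∈ E.filter (fun e => e.1 = e₀.1), lr e x) + α x := by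
    simp only [update_add_apply, sum_add_distrib, sum_ite_eq', mem_filter, he₀, true_and,
      if_true]
  simp only [pVtx, hrow, ← exp_add]
  ring_nf

lemma sum_pVtx_sub_update_add {e₀ : V × V} (he₀ : e₀ ∈ E) (α : Fin d → ℝ) :
    ∑ i, ∑ x, (pVtx E η Cv lr lc xiv i x -
        pVtx E η Cv (Function.update lr e₀ (fun x => lr e₀ x + α x)) lc xiv i x) =
      ∑ x, pVtx E η Cv lr lc xiv e₀.1 x * (1 - exp (α x)) := by
  rw [sum_eq_single_of_mem e₀.1 (mem_univ _) fun i _ hi => by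
    simp only [pVtx_update_of_ne _ _ _ _ _ _ _ hi, sub_self, sum_const_zero]]
  simp only [pVtx_update_add_self _ _ _ _ _ _ he₀, ← mul_one_sub]

end DualUpdate

theorem stmt_5_general {V : Type} [Fintype V] [DecidableEq V] {d : ℕ}
    (E : Finset (V × V)) (η : ℝ)
    (Cv : V → Fin d → ℝ) (Ce : V × V → Fin d → Fin d → ℝ)
    (lr lc : V × V → Fin d → ℝ) (xie : V × V → ℝ) (xiv : V → ℝ)
    (e₀ : V × V) (he₀ : e₀ ∈ E)
    (αstar : Fin d → ℝ)
    (hα : ∀ x, αstar x = (1 / 2) *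
      Real.log ((∑ y, pEdge η Ce lr lc xie e₀ x y) / pVtx E η Cv lr lc xiv e₀.1 x))
    (lr' : V × V → Fin d → ℝ)
    (hlr' : lr' = Function.update lr e₀ (fun x => lr e₀ x + αstar x)) :
    Lyap E η Cv Ce lr' lc xie xiv - Lyap E η Cv Ce lr lc xie xiv =
      2 * hell2 (fun x => ∑ y, pEdge η Ce lr lc xie e₀ x y)
        (fun x => pVtx E η Cv lr lc xiv e₀.1 x) := by
  subst hlr'
  rw [Lyap_sub_Lyap, sum_pEdge_sub_update_add E η Ce lr lc xie he₀,
    sum_pVtx_sub_update_add E η Cv lr lc xiv he₀, hell2, ← mul_assoc,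
    mul_one_div_cancel two_ne_zero, one_mul, ← sum_add_distrib]
  refine sum_congr rfl fun x _ => ?_
  have hrow : 0 < ∑ y, pEdge η Ce lr lc xie e₀ x y :=
    sum_pos (fun _ _ => exp_pos _) ⟨x, mem_univ _⟩
  exact mul_one_sub_exp_neg_add_mul_one_sub_exp hrow (exp_pos _) (hα x)

/-- The row-consistency dual update on an edge `ij ∈ E`
improves the Lyapunov function by exactly twice the squared Hellinger distance
between the row sums of `Γ_{ij}` and `Γ_i`. -/
theorem stmt_5 {V : Type} [Fintype V] [DecidableEq V] {d : ℕ} (hd : 1 ≤ d)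
    (E : Finset (V × V)) (η : ℝ) (hη : 0 < η)
    (Cv : V → Fin d → ℝ) (Ce : V × V → Fin d → Fin d → ℝ)
    (lr lc : V × V → Fin d → ℝ) (xie : V × V → ℝ) (xiv : V → ℝ)
    (e₀ : V × V) (he₀ : e₀ ∈ E)
    (αstar : Fin d → ℝ)
    (hα : ∀ x, αstar x = (1 / 2) *
      Real.log ((∑ y, pEdge η Ce lr lc xie e₀ x y) / pVtx E η Cv lr lc xiv e₀.1 x))
    (lr' : V × V → Fin d → ℝ)
    (hlr' : lr' = Function.update lr e₀ (fun x => lr e₀ x + αstar x)) :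
    Lyap E η Cv Ce lr' lc xie xiv - Lyap E η Cv Ce lr lc xie xiv =
      2 * hell2 (fun x => ∑ y, pEdge η Ce lr lc xie e₀ x y)
        (fun x => pVtx E η Cv lr lc xiv e₀.1 x) :=
  stmt_5_general E η Cv Ce lr lc xie xiv e₀ he₀ αstar hα lr' hlr'
end
end

section
/- Fix dual variables (λ,ξ) with associated primal variables Γ as in the context, fix an edge ij∈E, and let ξ' agree with ξ except that ξ'_{ij} = ξ_{ij} + log s₁ and ξ'_i = ξ_i + log s₂, where s₁ = Σ_{x_i,x_j} Γ_{ij}(x_i,x_j) > 0 and s₂ = Σ_x Γ_i(x) > 0. Then L(λ,ξ') − L(λ,ξ) = (s₁ − log s₁ − 1) + (s₂ − log s₂ − 1) ≥ 0; in particular the normalization update does not decrease L. -/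
noncomputable section

/-!
Shifting `ξ_e` by `c` multiplies the primal mass of `e` by `exp (-c)` and raises `Σ ξ` by `c`, so
the term `-(mass_e + ξ_e)` of `L` gains `m - log m - 1` when `c = log m` normalizes the mass `m`
of `e` to one. Both normalizations act on disjoint terms of `L`, and `t - log t - 1 ≥ 0` is
`log t ≤ t - 1`.
-/

open Finset Real

lemma sum_add_sub_sum_exp_mul_add_update_log {ι : Type*} [DecidableEq ι] {s : Finset ι} {i : ι}
    (hi : i ∈ s) (m ξ : ι → ℝ) (hm : 0 < m i) :
    let ξ' := Function.update ξ i (ξ i + log (m i))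
    (∑ e ∈ s, (m e + ξ e)) - ∑ e ∈ s, (exp (ξ e - ξ' e) * m e + ξ' e) = m i - log (m i) - 1 := by
  intro ξ'
  have h_off : ∀ e ∈ s.erase i, exp (ξ e - ξ' e) * m e + ξ' e = m e + ξ e := fun e he => by
    simp [ξ', Function.update_of_ne (ne_of_mem_erase he)]
  have h_at : exp (ξ i - ξ' i) * m i = 1 := by
    simp only [ξ', Function.update_self, sub_add_cancel_left, exp_neg, exp_log hm,
      inv_mul_cancel₀ hm.ne']
  rw [← sum_erase_add _ _ hi, ← sum_erase_add _ _ hi, sum_congr rfl h_off, h_at]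
  simp only [ξ', Function.update_self]
  ring

lemma sub_log_sub_one_nonneg {t : ℝ} (ht : 0 < t) : 0 ≤ t - log t - 1 := by
  linarith [log_le_sub_one_of_pos ht]

section Shift

variable {V : Type} {d : ℕ}

lemma pEdge_eq_exp_sub_mul (η : ℝ) (Ce : V × V → Fin d → Fin d → ℝ) (lr lc : V × V → Fin d → ℝ)
    (xie xie' : V × V → ℝ) (e : V × V) (x y : Fin d) :
    pEdge η Ce lr lc xie' e x y = exp (xie e - xie' e) * pEdge η Ce lr lc xie e x y := by
  rw [pEdge, pEdge, ← exp_add]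
  ring_nf

lemma pVtx_eq_exp_sub_mul [Fintype V] [DecidableEq V] (E : Finset (V × V)) (η : ℝ)
    (Cv : V → Fin d → ℝ) (lr lc : V × V → Fin d → ℝ) (xiv xiv' : V → ℝ) (i : V) (x : Fin d) :
    pVtx E η Cv lr lc xiv' i x = exp (xiv i - xiv' i) * pVtx E η Cv lr lc xiv i x := by
  rw [pVtx, pVtx, ← exp_add]
  ring_nf

end Shift

theorem stmt_6_general {V : Type} [Fintype V] [DecidableEq V] {d : ℕ}
    (E : Finset (V × V)) (η : ℝ)
    (Cv : V → Fin d → ℝ) (Ce : V × V → Fin d → Fin d → ℝ)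
    (lr lc : V × V → Fin d → ℝ) (xie : V × V → ℝ) (xiv : V → ℝ)
    (e₀ : V × V) (he₀ : e₀ ∈ E)
    (s₁ s₂ : ℝ)
    (hs₁ : s₁ = ∑ x : Fin d, ∑ y : Fin d, pEdge η Ce lr lc xie e₀ x y)
    (hs₂ : s₂ = ∑ x : Fin d, pVtx E η Cv lr lc xiv e₀.1 x)
    (hs₁pos : 0 < s₁) (hs₂pos : 0 < s₂)
    (xie' : V × V → ℝ) (hxie' : xie' = Function.update xie e₀ (xie e₀ + Real.log s₁))
    (xiv' : V → ℝ) (hxiv' : xiv' = Function.update xiv e₀.1 (xiv e₀.1 + Real.log s₂)) :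
    Lyap E η Cv Ce lr lc xie' xiv' - Lyap E η Cv Ce lr lc xie xiv =
      (s₁ - Real.log s₁ - 1) + (s₂ - Real.log s₂ - 1) ∧
    0 ≤ Lyap E η Cv Ce lr lc xie' xiv' - Lyap E η Cv Ce lr lc xie xiv := by
  have h_edge := sum_add_sub_sum_exp_mul_add_update_log he₀
    (fun e => ∑ x : Fin d, ∑ y : Fin d, pEdge η Ce lr lc xie e x y) xie (hs₁ ▸ hs₁pos)
  have h_vtx := sum_add_sub_sum_exp_mul_add_update_log (mem_univ e₀.1)
    (fun i => ∑ x : Fin d, pVtx E η Cv lr lc xiv i x) xiv (hs₂ ▸ hs₂pos)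
  simp only [← hs₁, ← hs₂, ← hxie', ← hxiv', mul_sum, sum_add_distrib] at h_edge h_vtx
  have h_diff : Lyap E η Cv Ce lr lc xie' xiv' - Lyap E η Cv Ce lr lc xie xiv =
      (s₁ - log s₁ - 1) + (s₂ - log s₂ - 1) := by
    simp only [Lyap, pEdge_eq_exp_sub_mul η Ce lr lc xie xie',
      pVtx_eq_exp_sub_mul E η Cv lr lc xiv xiv']
    linarith
  exact ⟨h_diff, h_diff ▸ add_nonneg (sub_log_sub_one_nonneg hs₁pos)
    (sub_log_sub_one_nonneg hs₂pos)⟩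

/-- The normalization dual update on an edge `ij ∈ E`
(at `i = e₀.1`) changes `L` by `(s₁ − log s₁ − 1) + (s₂ − log s₂ − 1) ≥ 0`. -/
theorem stmt_6 {V : Type} [Fintype V] [DecidableEq V] {d : ℕ} (hd : 1 ≤ d)
    (E : Finset (V × V)) (η : ℝ) (hη : 0 < η)
    (Cv : V → Fin d → ℝ) (Ce : V × V → Fin d → Fin d → ℝ)
    (lr lc : V × V → Fin d → ℝ) (xie : V × V → ℝ) (xiv : V → ℝ)
    (e₀ : V × V) (he₀ : e₀ ∈ E)
    (s₁ s₂ : ℝ)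
    (hs₁ : s₁ = ∑ x : Fin d, ∑ y : Fin d, pEdge η Ce lr lc xie e₀ x y)
    (hs₂ : s₂ = ∑ x : Fin d, pVtx E η Cv lr lc xiv e₀.1 x)
    (hs₁pos : 0 < s₁) (hs₂pos : 0 < s₂)
    (xie' : V × V → ℝ) (hxie' : xie' = Function.update xie e₀ (xie e₀ + Real.log s₁))
    (xiv' : V → ℝ) (hxiv' : xiv' = Function.update xiv e₀.1 (xiv e₀.1 + Real.log s₂)) :
    Lyap E η Cv Ce lr lc xie' xiv' - Lyap E η Cv Ce lr lc xie xiv =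
      (s₁ - Real.log s₁ - 1) + (s₂ - Real.log s₂ - 1) ∧
    0 ≤ Lyap E η Cv Ce lr lc xie' xiv' - Lyap E η Cv Ce lr lc xie xiv :=
  stmt_6_general E η Cv Ce lr lc xie xiv e₀ he₀ s₁ s₂ hs₁ hs₂ hs₁pos hs₂pos xie' hxie' xiv' hxiv'
end
end

section
/- Suppose the Lyapunov function L attains its maximum at dual variables (λ*,ξ*), and let (λ^(1),ξ^(1)) be given by λ^(1) = 0, ξ^(1)_{ij} = log Σ_{x_i,x_j} exp(−ηC_{ij}(x_i,x_j)) for every ij∈E, and ξ^(1)_i = log Σ_x exp(−ηC_i(x)) for every i∈V (the dual variables after normalizing every component of exp(−ηC)). Then L(λ*,ξ*) − L(λ^(1),ξ^(1)) ≤ S₀. -/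
noncomputable section

/-- The quantity `S`. -/
def Sval {V : Type} [Fintype V] {d : ℕ} (E : Finset (V × V)) (η : ℝ)
    (Cv : V → Fin d → ℝ) (Ce : V × V → Fin d → Fin d → ℝ) : ℝ :=
  (∑ e ∈ E, (Real.log (∑ x : Fin d, ∑ y : Fin d, Real.exp (-(η * Ce e x y))) +
      ∑ x : Fin d, ∑ y : Fin d, η / (d : ℝ) ^ 2 * Ce e x y)) +
  ∑ i : V, (Real.log (∑ x : Fin d, Real.exp (-(η * Cv i x))) +
      ∑ x : Fin d, η / (d : ℝ) * Cv i x)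

/-- `‖ηC/d + exp(−ηC)‖₁`. -/
def l1shift {V : Type} [Fintype V] {d : ℕ} (E : Finset (V × V)) (η : ℝ)
    (Cv : V → Fin d → ℝ) (Ce : V × V → Fin d → Fin d → ℝ) : ℝ :=
  (∑ i : V, ∑ x : Fin d, |η * Cv i x / (d : ℝ) + Real.exp (-(η * Cv i x))|) +
  ∑ e ∈ E, ∑ x : Fin d, ∑ y : Fin d,
    |η * Ce e x y / (d : ℝ) + Real.exp (-(η * Ce e x y))|

/-- `S₀ = min(‖ηC/d + exp(−ηC)‖₁, S)`. -/
def S0 {V : Type} [Fintype V] {d : ℕ} (E : Finset (V × V)) (η : ℝ)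
    (Cv : V → Fin d → ℝ) (Ce : V × V → Fin d → Fin d → ℝ) : ℝ :=
  min (l1shift E η Cv Ce) (Sval E η Cv Ce)

/-!
Each edge and each vertex contributes to `L` a term `-(∑ₖ exp (gₖ - t)) - t`, where `t` is its
normalizing dual `ξ`. Maximizing over `t` gives `-1 - log ∑ₖ exp gₖ`, attained exactly at the
normalization `ξ⁽¹⁾`, and Jensen bounds `log ∑ₖ exp gₖ` from below by the mean of `g`. The duals
`λ` enter these means linearly and cancel between edges and vertices, so
`L(λ, ξ) - L(0, ξ⁽¹⁾) ≤ S` for all duals, in particular at the maximizer. Finally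
`S ≤ ‖ηC/d + exp(−ηC)‖₁` block by block, from `exp (-c) ≥ 1 - c` and the monotonicity of
`log z - z` on `[1, ∞)`.
-/

open Real Finset

theorem log_sub_self_le_log_sub_self {a b : ℝ} (ha : 1 ≤ a) (hab : a ≤ b) :
    log b - b ≤ log a - a := by
  have ha0 : 0 < a := by linarith
  have hb0 : 0 < b := by linarith
  have hlog : log (b / a) ≤ b / a - 1 := log_le_sub_one_of_pos (div_pos hb0 ha0)
  rw [log_div hb0.ne' ha0.ne'] at hlog
  have : b / a - 1 ≤ b - a := by
    rw [div_sub_one ha0.ne', div_le_iff₀ ha0]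
    nlinarith
  linarith

section LogSumExp

variable {ι : Type*} [Fintype ι] [Nonempty ι]

theorem sum_exp_pos (g : ι → ℝ) : 0 < ∑ k, exp (g k) :=
  sum_pos (fun k _ => exp_pos (g k)) univ_nonempty

theorem sum_div_card_le_log_sum_exp (g : ι → ℝ) :
    (∑ k, g k) / Fintype.card ι ≤ log (∑ k, exp (g k)) := by
  have hN : (1 : ℝ) ≤ Fintype.card ι := by exact_mod_cast Fintype.card_pos
  have jensen := convexOn_exp.map_sum_le (t := univ) (w := fun _ => (Fintype.card ι : ℝ)⁻¹)
    (p := g) (fun _ _ => by positivity) (by simp) (fun _ _ => Set.mem_univ _)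
  simp only [smul_eq_mul, ← mul_sum] at jensen
  rw [le_log_iff_exp_le (sum_exp_pos g), div_eq_inv_mul]
  refine jensen.trans (inv_mul_le_of_le_mul₀ (by positivity) (by positivity) ?_)
  exact le_mul_of_one_le_left (sum_exp_pos g).le hN

theorem neg_sum_exp_sub_sub_le (g : ι → ℝ) (t : ℝ) :
    -(∑ k, exp (g k - t)) - t ≤ -1 - (∑ k, g k) / Fintype.card ι := by
  have hZ := sum_exp_pos g
  have hsum : ∑ k, exp (g k - t) = exp (log (∑ k, exp (g k)) - t) := by
    simp_rw [exp_sub, ← sum_div, exp_log hZ]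
  have := add_one_le_exp (log (∑ k, exp (g k)) - t)
  linarith [sum_div_card_le_log_sum_exp g]

theorem neg_sum_exp_sub_log_sum_exp (g : ι → ℝ) :
    -(∑ k, exp (g k - log (∑ j, exp (g j)))) - log (∑ j, exp (g j)) =
      -1 - log (∑ j, exp (g j)) := by
  simp_rw [exp_sub, ← sum_div, exp_log (sum_exp_pos g), div_self (sum_exp_pos g).ne']

theorem log_sum_exp_neg_add_sum_div_card_le {m : ℝ} (hm : 1 ≤ m) (hmN : m ≤ Fintype.card ι)
    (c : ι → ℝ) :
    log (∑ k, exp (-c k)) + (∑ k, c k) / Fintype.card ι ≤ ∑ k, (c k / m + exp (-c k)) := by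
  set N : ℝ := (Fintype.card ι : ℝ)
  set s := ∑ k, c k
  set Z := ∑ k, exp (-c k)
  have hN : 0 < N := by linarith
  have hZ : 0 < Z := sum_exp_pos _
  have hZs : N - s ≤ Z := by
    have : ∑ k, (-c k + 1) ≤ Z := sum_le_sum fun k _ => add_one_le_exp (-c k)
    simpa [sum_add_distrib, N, s, add_comm] using this
  rw [sum_add_distrib, ← sum_div]
  rcases le_or_gt 0 s with hs | hs
  · have : s / N ≤ s / m := div_le_div_of_nonneg_left hs (by linarith) hmN
    linarith [log_le_sub_one_of_pos hZ]
  · have hmono := log_sub_self_le_log_sub_self (by linarith) hZs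
    have hlog : log (N - s) - log N ≤ -(s / N) := by
      rw [← log_div (by linarith) hN.ne']
      calc log ((N - s) / N) ≤ (N - s) / N - 1 :=
            log_le_sub_one_of_pos (div_pos (by linarith) hN)
        _ = -(s / N) := by field_simp; ring
    have hs_m : s ≤ s / m := by rw [le_div_iff₀ (by linarith)]; nlinarith
    linarith [log_le_sub_one_of_pos hN]

end LogSumExp

section EdgeTerm

variable {V : Type} {d : ℕ}

def lyapEdgeTerm (η : ℝ) (Ce : V × V → Fin d → Fin d → ℝ) (lr lc : V × V → Fin d → ℝ)
    (xie : V × V → ℝ) (e : V × V) : ℝ :=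
  -(∑ x, ∑ y, pEdge η Ce lr lc xie e x y) - xie e

theorem lyapEdgeTerm_sub_le (hd : 1 ≤ d) (η : ℝ) (Ce : V × V → Fin d → Fin d → ℝ)
    (lr lc : V × V → Fin d → ℝ) (xie : V × V → ℝ) (e : V × V) :
    lyapEdgeTerm η Ce lr lc xie e -
        lyapEdgeTerm η Ce 0 0 (fun e => log (∑ x, ∑ y, exp (-(η * Ce e x y)))) e ≤
      log (∑ x, ∑ y, exp (-(η * Ce e x y))) + ∑ x, ∑ y, η / (d : ℝ) ^ 2 * Ce e x y +
        ((∑ x, lr e x) + ∑ x, lc e x) / d := by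
  have : Nonempty (Fin d) := ⟨⟨0, hd⟩⟩
  have hd0 : (d : ℝ) ≠ 0 := by positivity
  have hbound := neg_sum_exp_sub_sub_le
    (fun p : Fin d × Fin d => -(η * Ce e p.1 p.2) - lr e p.1 - lc e p.2) (xie e)
  have hnormalized :=
    neg_sum_exp_sub_log_sum_exp (fun p : Fin d × Fin d => -(η * Ce e p.1 p.2))
  simp only [Fintype.sum_prod_type, Fintype.card_prod, Fintype.card_fin] at hbound hnormalized
  have hmean : (∑ x, ∑ y, (-(η * Ce e x y) - lr e x - lc e y)) / ((d * d : ℕ) : ℝ) =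
      -(∑ x, ∑ y, η / (d : ℝ) ^ 2 * Ce e x y) - ((∑ x, lr e x) + ∑ x, lc e x) / d := by
    simp only [sum_sub_distrib, sum_neg_distrib, sum_const, card_univ, Fintype.card_fin,
      nsmul_eq_mul, ← mul_sum]
    push_cast
    field_simp
    ring
  simp only [lyapEdgeTerm, pEdge, Pi.zero_apply, sub_zero]
  linarith

end EdgeTerm

section VtxTerm

variable {V : Type} [Fintype V] [DecidableEq V] {d : ℕ}

def dualLoad (E : Finset (V × V)) (lr lc : V × V → Fin d → ℝ) (i : V) (x : Fin d) : ℝ :=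
  (∑ e ∈ E.filter (fun e => e.1 = i), lr e x) + ∑ e ∈ E.filter (fun e => e.2 = i), lc e x

theorem sum_sum_dualLoad (E : Finset (V × V)) (lr lc : V × V → Fin d → ℝ) :
    ∑ i, ∑ x, dualLoad E lr lc i x = ∑ e ∈ E, ((∑ x, lr e x) + ∑ x, lc e x) := by
  have fiberwise (f : V × V → Fin d → ℝ) (g : V × V → V) :
      ∑ i, ∑ x, ∑ e ∈ E with g e = i, f e x = ∑ e ∈ E, ∑ x, f e x := by
    rw [← sum_fiberwise E g (fun e => ∑ x, f e x)]
    exact sum_congr rfl fun i _ => sum_comm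
  simp only [dualLoad, sum_add_distrib, fiberwise]

def lyapVtxTerm (E : Finset (V × V)) (η : ℝ) (Cv : V → Fin d → ℝ) (lr lc : V × V → Fin d → ℝ)
    (xiv : V → ℝ) (i : V) : ℝ :=
  -(∑ x, pVtx E η Cv lr lc xiv i x) - xiv i

theorem lyapVtxTerm_sub_le (hd : 1 ≤ d) (E : Finset (V × V)) (η : ℝ) (Cv : V → Fin d → ℝ)
    (lr lc : V × V → Fin d → ℝ) (xiv : V → ℝ) (i : V) :
    lyapVtxTerm E η Cv lr lc xiv i -
        lyapVtxTerm E η Cv 0 0 (fun i => log (∑ x, exp (-(η * Cv i x)))) i ≤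
      log (∑ x, exp (-(η * Cv i x))) + ∑ x, η / (d : ℝ) * Cv i x -
        (∑ x, dualLoad E lr lc i x) / d := by
  have : Nonempty (Fin d) := ⟨⟨0, hd⟩⟩
  have hd0 : (d : ℝ) ≠ 0 := by positivity
  have hbound := neg_sum_exp_sub_sub_le
    (fun x : Fin d => -(η * Cv i x) + dualLoad E lr lc i x) (xiv i)
  have hnormalized := neg_sum_exp_sub_log_sum_exp (fun x : Fin d => -(η * Cv i x))
  simp only [Fintype.card_fin] at hbound
  have hmean : (∑ x, (-(η * Cv i x) + dualLoad E lr lc i x)) / d =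
      -(∑ x, η / (d : ℝ) * Cv i x) + (∑ x, dualLoad E lr lc i x) / d := by
    rw [sum_add_distrib, sum_neg_distrib, ← mul_sum, ← mul_sum]
    field_simp
  have hexponent : ∀ x, -(η * Cv i x) - xiv i + (∑ e ∈ E with e.1 = i, lr e x) +
      ∑ e ∈ E with e.2 = i, lc e x = -(η * Cv i x) + dualLoad E lr lc i x - xiv i := by
    intro x; rw [dualLoad]; ring
  simp only [lyapVtxTerm, pVtx, hexponent, Pi.zero_apply, sum_const_zero, add_zero]
  linarith

theorem Lyap_eq_sum_terms (E : Finset (V × V)) (η : ℝ) (Cv : V → Fin d → ℝ)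
    (Ce : V × V → Fin d → Fin d → ℝ) (lr lc : V × V → Fin d → ℝ) (xie : V × V → ℝ)
    (xiv : V → ℝ) :
    Lyap E η Cv Ce lr lc xie xiv =
      (∑ e ∈ E, lyapEdgeTerm η Ce lr lc xie e) + (∑ i, lyapVtxTerm E η Cv lr lc xiv i) +
      (∑ e ∈ E, ∑ x, ∑ y, exp (-(η * Ce e x y))) + ∑ i, ∑ x, exp (-(η * Cv i x)) := by
  simp only [Lyap, lyapEdgeTerm, lyapVtxTerm, sum_sub_distrib, sum_neg_distrib]
  ring

end VtxTerm

theorem Lyap_sub_Lyap_normalized_le_Sval {V : Type} [Fintype V] [DecidableEq V] {d : ℕ}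
    (hd : 1 ≤ d) (E : Finset (V × V)) (η : ℝ) (Cv : V → Fin d → ℝ)
    (Ce : V × V → Fin d → Fin d → ℝ) (lr lc : V × V → Fin d → ℝ) (xie : V × V → ℝ)
    (xiv : V → ℝ) :
    Lyap E η Cv Ce lr lc xie xiv -
        Lyap E η Cv Ce 0 0 (fun e => log (∑ x, ∑ y, exp (-(η * Ce e x y))))
          (fun i => log (∑ x, exp (-(η * Cv i x)))) ≤
      Sval E η Cv Ce := by
  have hedges := sum_le_sum fun e (_ : e ∈ E) => lyapEdgeTerm_sub_le hd η Ce lr lc xie e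
  have hvertices := sum_le_sum fun i (_ : i ∈ univ) => lyapVtxTerm_sub_le hd E η Cv lr lc xiv i
  simp only [sum_sub_distrib, sum_add_distrib, ← sum_div, sum_sum_dualLoad] at hedges hvertices
  rw [Lyap_eq_sum_terms, Lyap_eq_sum_terms, Sval, sum_add_distrib, sum_add_distrib]
  linarith

theorem Sval_le_l1shift {V : Type} [Fintype V] {d : ℕ} (hd : 1 ≤ d) (E : Finset (V × V))
    (η : ℝ) (Cv : V → Fin d → ℝ) (Ce : V × V → Fin d → Fin d → ℝ) :
    Sval E η Cv Ce ≤ l1shift E η Cv Ce := by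
  have : Nonempty (Fin d) := ⟨⟨0, hd⟩⟩
  have hd1 : (1 : ℝ) ≤ d := by exact_mod_cast hd
  rw [Sval, l1shift, add_comm (∑ i, _)]
  gcongr with e _ i _
  · have h := log_sum_exp_neg_add_sum_div_card_le (m := d) hd1 (by simp; nlinarith)
      (fun p : Fin d × Fin d => η * Ce e p.1 p.2)
    simp only [Fintype.sum_prod_type, Fintype.card_prod, Fintype.card_fin] at h
    calc _ = log (∑ x, ∑ y, exp (-(η * Ce e x y))) +
            (∑ x, ∑ y, η * Ce e x y) / ((d * d : ℕ) : ℝ) := by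
          simp only [sum_div, Nat.cast_mul]; ring_nf
      _ ≤ _ := h
      _ ≤ _ := sum_le_sum fun x _ => sum_le_sum fun y _ => le_abs_self _
  · have h := log_sum_exp_neg_add_sum_div_card_le (m := d) hd1 (by simp)
      (fun x : Fin d => η * Cv i x)
    simp only [Fintype.card_fin] at h
    calc _ = log (∑ x, exp (-(η * Cv i x))) + (∑ x, η * Cv i x) / d := by
          simp only [sum_div]; ring_nf
      _ ≤ _ := h
      _ ≤ _ := sum_le_sum fun x _ => le_abs_self _

theorem stmt_7_general {V : Type} [Fintype V] [DecidableEq V] {d : ℕ} (hd : 1 ≤ d)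
    (E : Finset (V × V))
    (η : ℝ)
    (Cv : V → Fin d → ℝ) (Ce : V × V → Fin d → Fin d → ℝ)
    (lrS lcS : V × V → Fin d → ℝ) (xieS : V × V → ℝ) (xivS : V → ℝ)
    (xie1 : V × V → ℝ)
    (hxie1 : ∀ e, xie1 e = Real.log (∑ x : Fin d, ∑ y : Fin d, Real.exp (-(η * Ce e x y))))
    (xiv1 : V → ℝ)
    (hxiv1 : ∀ i, xiv1 i = Real.log (∑ x : Fin d, Real.exp (-(η * Cv i x)))) :
    Lyap E η Cv Ce lrS lcS xieS xivS - Lyap E η Cv Ce 0 0 xie1 xiv1 ≤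
      S0 E η Cv Ce := by
  obtain rfl : xie1 = _ := funext hxie1
  obtain rfl : xiv1 = _ := funext hxiv1
  have hgap := Lyap_sub_Lyap_normalized_le_Sval hd E η Cv Ce lrS lcS xieS xivS
  exact le_min (hgap.trans (Sval_le_l1shift hd E η Cv Ce)) hgap

/-- The gap between the maximal Lyapunov value and its value
at the initial duals (those normalizing every component of `exp(−ηC)`) is at
most `S₀`. -/
theorem stmt_7 {V : Type} [Fintype V] [DecidableEq V] {d : ℕ} (hd : 1 ≤ d)
    (E : Finset (V × V))
    (hcover : ∀ i : V, ∃ e ∈ E, e.1 = i ∨ e.2 = i)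
    (η : ℝ) (hη : 0 < η)
    (Cv : V → Fin d → ℝ) (Ce : V × V → Fin d → Fin d → ℝ)
    (lrS lcS : V × V → Fin d → ℝ) (xieS : V × V → ℝ) (xivS : V → ℝ)
    (hmax : ∀ (lr lc : V × V → Fin d → ℝ) (xie : V × V → ℝ) (xiv : V → ℝ),
      Lyap E η Cv Ce lr lc xie xiv ≤ Lyap E η Cv Ce lrS lcS xieS xivS)
    (xie1 : V × V → ℝ)
    (hxie1 : ∀ e, xie1 e = Real.log (∑ x : Fin d, ∑ y : Fin d, Real.exp (-(η * Ce e x y))))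
    (xiv1 : V → ℝ)
    (hxiv1 : ∀ i, xiv1 i = Real.log (∑ x : Fin d, Real.exp (-(η * Cv i x)))) :
    Lyap E η Cv Ce lrS lcS xieS xivS - Lyap E η Cv Ce 0 0 xie1 xiv1 ≤
      S0 E η Cv Ce :=
  stmt_7_general hd E η Cv Ce lrS lcS xieS xivS xie1 hxie1 xiv1 hxiv1
end
end

section
/- Let a, b ∈ Σ_d be two points in the probability simplex and let p ∈ ℝ^d_{≥0} satisfy min(a_i, b_i) ≤ p_i ≤ max(a_i, b_i) for all 1 ≤ i ≤ d, with Σ_i p_i > 0. Let c = p/(Σ_i p_i) ∈ Σ_d. Then max(‖a − c‖₁, ‖b − c‖₁) ≤ ‖a − b‖₁. -/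
/-!
Write `s = ∑ pᵢ`. By the triangle inequality `‖a - p/s‖₁ ≤ ‖a - p‖₁ + ‖p - p/s‖₁`, and since
`p ≥ 0` the rescaling costs exactly `‖p - p/s‖₁ = |s - 1| = |∑ (pᵢ - bᵢ)| ≤ ‖p - b‖₁`. As `p` lies
coordinatewise between `a` and `b`, `‖a - p‖₁ + ‖p - b‖₁ = ‖a - b‖₁`. The bound for `b` is symmetric.
-/

open Finset

lemma abs_sub_add_abs_sub_of_mem_uIcc {x y z : ℝ} (h : y ∈ Set.uIcc x z) :
    |x - y| + |y - z| = |x - z| := by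
  have h' : y ∈ segment ℝ x z := by rwa [segment_eq_uIcc]
  simpa only [Real.dist_eq] using dist_add_dist_of_mem_segment h'

section

variable {ι : Type*} [Fintype ι]

lemma sum_abs_sub_div_sum {p : ι → ℝ} (hp0 : ∀ i, 0 ≤ p i) (hps : 0 < ∑ i, p i) :
    ∑ i, |p i - p i / ∑ j, p j| = |∑ i, p i - 1| := by
  set s := ∑ j, p j
  have hterm : ∀ i, |p i - p i / s| = p i * (|s - 1| / s) := fun i => by
    rw [show p i - p i / s = p i * ((s - 1) / s) by field_simp, abs_mul, abs_div,
      abs_of_nonneg (hp0 i), abs_of_pos hps]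
  rw [Fintype.sum_congr _ _ hterm, ← sum_mul, mul_div_cancel₀ _ hps.ne']

lemma sum_abs_sub_normalize_le {a b p : ι → ℝ} (hb1 : ∑ i, b i = 1) (hp0 : ∀ i, 0 ≤ p i)
    (hp : ∀ i, p i ∈ Set.uIcc (a i) (b i)) (hps : 0 < ∑ i, p i) :
    ∑ i, |a i - p i / ∑ j, p j| ≤ ∑ i, |a i - b i| :=
  calc ∑ i, |a i - p i / ∑ j, p j|
      _ ≤ ∑ i, (|a i - p i| + |p i - p i / ∑ j, p j|) := sum_le_sum fun i _ => abs_sub_le _ _ _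
      _ = ∑ i, |a i - p i| + |∑ i, (p i - b i)| := by
        rw [sum_add_distrib, sum_abs_sub_div_sum hp0 hps, sum_sub_distrib, hb1]
      _ ≤ ∑ i, |a i - p i| + ∑ i, |p i - b i| := by gcongr; exact abs_sum_le_sum_abs _ _
      _ = ∑ i, |a i - b i| := by
        rw [← sum_add_distrib]
        exact sum_congr rfl fun i _ => abs_sub_add_abs_sub_of_mem_uIcc (hp i)

end

theorem stmt_10_general {d : ℕ} (a b p : Fin d → ℝ)
    (ha1 : ∑ i, a i = 1)
    (hb1 : ∑ i, b i = 1)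
    (hp0 : ∀ i, 0 ≤ p i)
    (hp : ∀ i, min (a i) (b i) ≤ p i ∧ p i ≤ max (a i) (b i))
    (hps : 0 < ∑ i, p i)
    (c : Fin d → ℝ) (hc : ∀ i, c i = p i / ∑ j, p j) :
    max (∑ i, |a i - c i|) (∑ i, |b i - c i|) ≤ ∑ i, |a i - b i| := by
  obtain rfl : c = fun i => p i / ∑ j, p j := funext hc
  have hp_ab : ∀ i, p i ∈ Set.uIcc (a i) (b i) := fun i => Set.mem_Icc.mpr (hp i)
  have hp_ba : ∀ i, p i ∈ Set.uIcc (b i) (a i) := fun i => Set.uIcc_comm (a i) (b i) ▸ hp_ab i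
  refine max_le (sum_abs_sub_normalize_le hb1 hp0 hp_ab hps) ?_
  calc ∑ i, |b i - p i / ∑ j, p j|
      _ ≤ ∑ i, |b i - a i| := sum_abs_sub_normalize_le ha1 hp0 hp_ba hps
      _ = ∑ i, |a i - b i| := sum_congr rfl fun i _ => abs_sub_comm _ _

/-- If `a, b` are in the probability simplex and the
nonnegative vector `p` lies coordinatewise between them (with positive total
mass), then the normalization `c` of `p` satisfies
`max(‖a − c‖₁, ‖b − c‖₁) ≤ ‖a − b‖₁`. -/
theorem stmt_10 {d : ℕ} (a b p : Fin d → ℝ)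
    (ha0 : ∀ i, 0 ≤ a i) (ha1 : ∑ i, a i = 1)
    (hb0 : ∀ i, 0 ≤ b i) (hb1 : ∑ i, b i = 1)
    (hp0 : ∀ i, 0 ≤ p i)
    (hp : ∀ i, min (a i) (b i) ≤ p i ∧ p i ≤ max (a i) (b i))
    (hps : 0 < ∑ i, p i)
    (c : Fin d → ℝ) (hc : ∀ i, c i = p i / ∑ j, p j) :
    max (∑ i, |a i - c i|) (∑ i, |b i - c i|) ≤ ∑ i, |a i - b i| :=
  stmt_10_general a b p ha1 hb1 hp0 hp hps c hc
end

section
/- Let A ∈ ℝ^{d×d}_{≥0} be a matrix with entries a_{ij} whose row sums r(A)_i are all strictly positive, and let p ∈ Σ_d. Define the matrix Ã with entries Ã_{ij} = (1/z)·a_{ij}·√(p_i/r(A)_i), where z = Σ_{i,j} a_{ij}√(p_i/r(A)_i) > 0 is the normalization constant making the entries of Ã sum to 1. Then ‖c(Ã) − c(A)‖₁ ≤ ‖r(Ã) − r(A)‖₁, where r(·) and c(·) denote the vectors of row sums and column sums respectively. -/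
/-!
`Ã` is a row rescaling `Ã_{ij} = t_i a_{ij}` of `A`. For any row rescaling of a nonnegative matrix,
the column-sum changes `∑_i (t_i - 1) a_{ij}` are bounded in `ℓ¹`, by the triangle inequality, by
`∑_{i,j} |t_i - 1| a_{ij} = ∑_i |t_i - 1| r(A)_i`, which is exactly the `ℓ¹` change of the row sums.
-/

open Finset

theorem sum_abs_colSum_rowScale_sub_le {R ι κ : Type*} [Ring R] [LinearOrder R]
    [IsStrictOrderedRing R] [Fintype ι] [Fintype κ] (A : ι → κ → R) (hA : ∀ i j, 0 ≤ A i j)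
    (t : ι → R) :
    ∑ j, |∑ i, t i * A i j - ∑ i, A i j| ≤ ∑ i, |∑ j, t i * A i j - ∑ j, A i j| :=
  calc ∑ j, |∑ i, t i * A i j - ∑ i, A i j|
      = ∑ j, |∑ i, (t i - 1) * A i j| := by simp only [← sum_sub_distrib, sub_one_mul]
    _ ≤ ∑ j, ∑ i, |(t i - 1) * A i j| := sum_le_sum fun j _ => abs_sum_le_sum_abs _ _
    _ = ∑ i, |t i - 1| * ∑ j, A i j := by
        rw [sum_comm]
        simp only [mul_sum, abs_mul, abs_of_nonneg (hA _ _)]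
    _ = ∑ i, |∑ j, t i * A i j - ∑ j, A i j| := by
        simp only [← mul_sum, ← sub_one_mul, abs_mul,
          abs_of_nonneg (sum_nonneg fun j _ => hA _ j)]

theorem stmt_11_general {d : ℕ} (A : Fin d → Fin d → ℝ) (p : Fin d → ℝ)
    (hA0 : ∀ i j, 0 ≤ A i j)
    (z : ℝ)
    (At : Fin d → Fin d → ℝ)
    (hAt : ∀ i j, At i j = A i j * Real.sqrt (p i / ∑ k, A i k) / z) :
    ∑ j, |(∑ i, At i j) - ∑ i, A i j| ≤ ∑ i, |(∑ j, At i j) - ∑ j, A i j| := by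
  have hscale : At = fun i j => Real.sqrt (p i / ∑ k, A i k) / z * A i j := by
    ext i j
    rw [hAt]
    ring
  subst hscale
  exact sum_abs_colSum_rowScale_sub_le A hA0 _

/-- For a nonnegative matrix `A` with positive row sums and
a simplex point `p`, the normalized reweighted matrix `Ã` with entries
`a_{ij}√(p_i/r(A)_i)/z` satisfies `‖c(Ã) − c(A)‖₁ ≤ ‖r(Ã) − r(A)‖₁`. -/
theorem stmt_11 {d : ℕ} (A : Fin d → Fin d → ℝ) (p : Fin d → ℝ)
    (hA0 : ∀ i j, 0 ≤ A i j) (hr : ∀ i, 0 < ∑ j, A i j)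
    (hp0 : ∀ i, 0 ≤ p i) (hp1 : ∑ i, p i = 1)
    (z : ℝ) (hz : z = ∑ i, ∑ j, A i j * Real.sqrt (p i / ∑ k, A i k))
    (hzpos : 0 < z)
    (At : Fin d → Fin d → ℝ)
    (hAt : ∀ i j, At i j = A i j * Real.sqrt (p i / ∑ k, A i k) / z) :
    ∑ j, |(∑ i, At i j) - ∑ i, A i j| ≤ ∑ i, |(∑ j, At i j) - ∑ j, A i j| :=
  stmt_11_general A p hA0 z At hAt
end

section
/- Let ν and ν' be two slack vectors with ‖ν'‖_∞ ≤ 1/(2d), and let Γ ∈ 𝕃₂^ν. If for every edge ij∈E both Γ_i + ν'_{ij} ∈ Σ_d and Γ_j + ν'_{ji} ∈ Σ_d, then there exists a marginal vector Γ' ∈ 𝕃₂^{ν'} such that ‖Γ − Γ'‖₁ ≤ 2‖ν − ν'‖₁. -/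
noncomputable section

/-- A marginal vector: a vector `Γ_i ∈ ℝ^d` for every vertex and a matrix
`Γ_{ij} ∈ ℝ^{d×d}` for every edge (components outside `E` are ignored). -/
abbrev MV (V : Type) (d : ℕ) : Type :=
  (V → Fin d → ℝ) × ((V × V) → Fin d → Fin d → ℝ)

/-- `‖Γ‖₁`: the sum of absolute values of all entries of `Γ`. -/
def mvL1 {V : Type} [Fintype V] {d : ℕ} (E : Finset (V × V)) (Γ : MV V d) : ℝ :=
  (∑ i : V, ∑ x : Fin d, |Γ.1 i x|) + ∑ e ∈ E, ∑ x : Fin d, ∑ y : Fin d, |Γ.2 e x y|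

/-- A slack vector: for each edge `ij`, vectors `ν_{ij}` (first component)
and `ν_{ji}` (second component) in `ℝ^d`. -/
abbrev Slk (V : Type) (d : ℕ) : Type :=
  ((V × V) → Fin d → ℝ) × ((V × V) → Fin d → ℝ)

/-- Slack vectors have zero coordinate sums on every edge. -/
def isSlack {V : Type} {d : ℕ} (E : Finset (V × V)) (ν : Slk V d) : Prop :=
  ∀ e ∈ E, (∑ x, ν.1 e x = 0) ∧ (∑ x, ν.2 e x = 0)

/-- `‖ν‖₁`: the sum of absolute values of all entries of the slack vector. -/
def slkL1 {V : Type} {d : ℕ} (E : Finset (V × V)) (ν : Slk V d) : ℝ :=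
  ∑ e ∈ E, ((∑ x, |ν.1 e x|) + ∑ x, |ν.2 e x|)

/-- Membership in the slack polytope `𝕃₂^ν`; the local polytope `𝕃₂` is
`𝕃₂^0`. -/
def memSL2 {V : Type} [Fintype V] {d : ℕ} (E : Finset (V × V)) (ν : Slk V d)
    (Γ : MV V d) : Prop :=
  (∀ i x, 0 ≤ Γ.1 i x) ∧ (∀ i, ∑ x, Γ.1 i x = 1) ∧
  (∀ e ∈ E, ∀ x y, 0 ≤ Γ.2 e x y) ∧
  (∀ e ∈ E, ∀ x, ∑ y, Γ.2 e x y = Γ.1 e.1 x + ν.1 e x) ∧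
  (∀ e ∈ E, ∀ y, ∑ x, Γ.2 e x y = Γ.1 e.2 y + ν.2 e y) ∧
  (∀ e ∈ E, ∑ x, ∑ y, Γ.2 e x y = 1)

/-- Maximum degree of the graph. -/
def degG {V : Type} [Fintype V] [DecidableEq V] (E : Finset (V × V)) : ℕ :=
  Finset.univ.sup fun i : V => (E.filter fun e => e.1 = i ∨ e.2 = i).card

/-!
The vertex marginals are kept and each edge matrix `P = Γ_{ij}` is repaired separately into a
matrix `Q` with the prescribed marginals `r = Γ_i + ν'_{ij}` and `c = Γ_j + ν'_{ji}`. Scale the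
rows of `P` down to `min r (P𝟙)`, then the columns down to `min c (column sums)`; the result `N`
has row sums `≤ r` and column sums `≤ c`, and adding the product `u vᵀ / D` of the two deficits
`u, v` (both of mass `D`) restores the marginals exactly. Since `N ≤ P` and `N ≤ Q`, the cost is
at most twice the mass removed, which is at most `‖r - P𝟙‖₁ + ‖c - Pᵀ𝟙‖₁ = ‖ν_{ij} - ν'_{ij}‖₁ +
‖ν_{ji} - ν'_{ji}‖₁`.
-/

open Finset

section TransportRepair

variable {ι κ : Type*} [Fintype κ]

lemma exists_nonneg_le_sum_eq {p : κ → ℝ} (hp : ∀ y, 0 ≤ p y) {t : ℝ} (ht₀ : 0 ≤ t)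
    (ht : t ≤ ∑ y, p y) :
    ∃ q : κ → ℝ, (∀ y, 0 ≤ q y) ∧ (∀ y, q y ≤ p y) ∧ ∑ y, q y = t := by
  have hs : 0 ≤ ∑ y, p y := ht₀.trans ht
  refine ⟨fun y => t / (∑ y, p y) * p y, fun y => mul_nonneg (div_nonneg ht₀ hs) (hp y),
    fun y => mul_le_of_le_one_left (hp y) (div_le_one_of_le₀ ht hs), ?_⟩
  rw [← mul_sum]
  exact div_mul_cancel_of_imp fun h => le_antisymm (h ▸ ht) ht₀

lemma exists_le_rowSum_eq_min {P : ι → κ → ℝ} (hP : ∀ x y, 0 ≤ P x y) {r : ι → ℝ}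
    (hr : ∀ x, 0 ≤ r x) :
    ∃ M : ι → κ → ℝ, (∀ x y, 0 ≤ M x y) ∧ (∀ x y, M x y ≤ P x y) ∧
      ∀ x, ∑ y, M x y = min (r x) (∑ y, P x y) := by
  choose M hM₀ hMP hMrow using fun x => exists_nonneg_le_sum_eq (hP x)
    (le_min (hr x) (sum_nonneg fun y _ => hP x y)) (min_le_right (r x) _)
  exact ⟨M, hM₀, hMP, hMrow⟩

variable [Fintype ι]

lemma exists_ge_rowSum_colSum_eq {N : ι → κ → ℝ} {r : ι → ℝ} {c : κ → ℝ}
    (hr : ∀ x, ∑ y, N x y ≤ r x) (hc : ∀ y, ∑ x, N x y ≤ c y) (hrc : ∑ x, r x = ∑ y, c y) :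
    ∃ Q : ι → κ → ℝ, (∀ x y, N x y ≤ Q x y) ∧ (∀ x, ∑ y, Q x y = r x) ∧
      ∀ y, ∑ x, Q x y = c y := by
  set u : ι → ℝ := fun x => r x - ∑ y, N x y
  set v : κ → ℝ := fun y => c y - ∑ x, N x y
  have hu : ∀ x, 0 ≤ u x := fun x => sub_nonneg.2 (hr x)
  have hv : ∀ y, 0 ≤ v y := fun y => sub_nonneg.2 (hc y)
  have huv : ∑ x, u x = ∑ y, v y := by
    simp only [u, v, sum_sub_distrib, hrc, sum_comm (f := N)]
  refine ⟨fun x y => N x y + u x * v y / ∑ x, u x,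
    fun x y => le_add_of_nonneg_right (div_nonneg (mul_nonneg (hu x) (hv y))
      (sum_nonneg fun x _ => hu x)), fun x => ?_, fun y => ?_⟩
  · have hux : ∑ x, u x = 0 → u x = 0 := fun h =>
      (sum_eq_zero_iff_of_nonneg fun x _ => hu x).1 h x (mem_univ x)
    rw [sum_add_distrib, ← sum_div, ← mul_sum, ← huv, mul_div_cancel_of_imp hux]
    simp [u]
  · have hvy : ∑ y, v y = 0 → v y = 0 := fun h =>
      (sum_eq_zero_iff_of_nonneg fun y _ => hv y).1 h y (mem_univ y)
    rw [sum_add_distrib, ← sum_div, ← sum_mul, huv, mul_div_cancel_left_of_imp hvy]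
    simp [v]

lemma two_mul_sum_sub_min_eq_sum_abs {u v : ι → ℝ} (h : ∑ x, u x = ∑ x, v x) :
    2 * ∑ x, (u x - min (v x) (u x)) = ∑ x, |u x - v x| := by
  have hpt : ∀ x, 2 * (u x - min (v x) (u x)) = |u x - v x| + (u x - v x) := fun x => by
    rcases le_total (u x) (v x) with h | h
    · rw [min_eq_right h, abs_of_nonpos (sub_nonpos.2 h)]; ring
    · rw [min_eq_left h, abs_of_nonneg (sub_nonneg.2 h)]; ring
  rw [mul_sum, sum_congr rfl fun x _ => hpt x, sum_add_distrib, sum_sub_distrib, h, sub_self,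
    add_zero]

theorem exists_marginals_eq_sum_abs_sub_le {P : ι → κ → ℝ} (hP : ∀ x y, 0 ≤ P x y)
    {r : ι → ℝ} {c : κ → ℝ} (hr : ∀ x, 0 ≤ r x) (hc : ∀ y, 0 ≤ c y)
    (hrP : ∑ x, r x = ∑ x, ∑ y, P x y) (hcP : ∑ y, c y = ∑ x, ∑ y, P x y) :
    ∃ Q : ι → κ → ℝ, (∀ x y, 0 ≤ Q x y) ∧ (∀ x, ∑ y, Q x y = r x) ∧
      (∀ y, ∑ x, Q x y = c y) ∧
      ∑ x, ∑ y, |P x y - Q x y| ≤ ∑ x, |∑ y, P x y - r x| + ∑ y, |∑ x, P x y - c y| := by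
  obtain ⟨M, hM₀, hMP, hMrow⟩ := exists_le_rowSum_eq_min hP hr
  obtain ⟨T, hT₀, hTM, hTrow⟩ :=
    exists_le_rowSum_eq_min (P := fun y x => M x y) (fun y x => hM₀ x y) hc
  obtain ⟨Q, hTQ, hQrow, hQcol⟩ := exists_ge_rowSum_colSum_eq (N := fun x y => T y x)
    (fun x => (sum_le_sum fun y _ => hTM y x).trans ((hMrow x).trans_le (min_le_left _ _)))
    (fun y => (hTrow y).trans_le (min_le_left _ _)) (hrP.trans hcP.symm)
  refine ⟨Q, fun x y => (hT₀ y x).trans (hTQ x y), hQrow, hQcol, ?_⟩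
  have hTP : ∀ x y, T y x ≤ P x y := fun x y => (hTM y x).trans (hMP x y)
  have hQmass : ∑ x, ∑ y, Q x y = ∑ x, ∑ y, P x y := by simp only [hQrow, hrP]
  -- `T` lies below both `P` and `Q`, so the cost is at most twice the mass removed from `P`
  have hcost : ∑ x, ∑ y, |P x y - Q x y| ≤ 2 * (∑ x, ∑ y, P x y - ∑ y, ∑ x, T y x) := by
    calc ∑ x, ∑ y, |P x y - Q x y| ≤ ∑ x, ∑ y, ((P x y - T y x) + (Q x y - T y x)) :=
          sum_le_sum fun x _ => sum_le_sum fun y _ =>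
            abs_sub_le_iff.2 ⟨by linarith [hTQ x y], by linarith [hTP x y]⟩
      _ = 2 * (∑ x, ∑ y, P x y - ∑ y, ∑ x, T y x) := by
          simp only [sum_add_distrib, sum_sub_distrib, hQmass, sum_comm (f := fun x y => T y x)]
          ring
  have hremoved : ∑ x, ∑ y, P x y - ∑ y, ∑ x, T y x = ∑ x, (∑ y, P x y - min (r x) (∑ y, P x y))
      + ∑ y, (∑ x, M x y - min (c y) (∑ x, M x y)) := by
    simp only [sum_sub_distrib, ← hMrow, ← hTrow, sum_comm (f := M)]
    ring
  have hcol : ∑ y, (∑ x, M x y - min (c y) (∑ x, M x y))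
      ≤ ∑ y, (∑ x, P x y - min (c y) (∑ x, P x y)) := by
    refine sum_le_sum fun y _ => ?_
    have hMPy : ∑ x, M x y ≤ ∑ x, P x y := sum_le_sum fun x _ => hMP x y
    rw [min_def, min_def]
    split_ifs <;> linarith
  rw [← two_mul_sum_sub_min_eq_sum_abs (hrP.symm),
    ← two_mul_sum_sub_min_eq_sum_abs (hcP.trans (sum_comm)).symm]
  linarith

end TransportRepair

lemma slkL1_nonneg {V : Type} {d : ℕ} (E : Finset (V × V)) (ν : Slk V d) : 0 ≤ slkL1 E ν :=
  sum_nonneg fun _ _ => by positivity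

lemma mvL1_sub_of_fst_eq {V : Type} [Fintype V] {d : ℕ} (E : Finset (V × V)) {Γ Γ' : MV V d}
    (h : Γ.1 = Γ'.1) : mvL1 E (Γ - Γ') = ∑ e ∈ E, ∑ x, ∑ y, |Γ.2 e x y - Γ'.2 e x y| := by
  simp [mvL1, h]

theorem stmt_12_general {V : Type} [Fintype V] {d : ℕ}
    (E : Finset (V × V))
    (ν ν' : Slk V d)
    (Γ : MV V d) (hΓ : memSL2 E ν Γ)
    (hsimplex : ∀ e ∈ E,
      ((∀ x, 0 ≤ Γ.1 e.1 x + ν'.1 e x) ∧ (∑ x, (Γ.1 e.1 x + ν'.1 e x)) = 1) ∧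
      ((∀ y, 0 ≤ Γ.1 e.2 y + ν'.2 e y) ∧ (∑ y, (Γ.1 e.2 y + ν'.2 e y)) = 1)) :
    ∃ Γ' : MV V d, memSL2 E ν' Γ' ∧
      mvL1 E (Γ - Γ') ≤ 2 * slkL1 E (ν - ν') := by
  obtain ⟨hΓ₀, hΓ₁, hP₀, hProw, hPcol, hPmass⟩ := hΓ
  have hrepair : ∀ e ∈ E, ∃ Q : Fin d → Fin d → ℝ, (∀ x y, 0 ≤ Q x y) ∧
      (∀ x, ∑ y, Q x y = Γ.1 e.1 x + ν'.1 e x) ∧ (∀ y, ∑ x, Q x y = Γ.1 e.2 y + ν'.2 e y) ∧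
      ∑ x, ∑ y, |Γ.2 e x y - Q x y| ≤ ∑ x, |(ν - ν').1 e x| + ∑ y, |(ν - ν').2 e y| := by
    intro e he
    obtain ⟨⟨hr₀, hr₁⟩, hc₀, hc₁⟩ := hsimplex e he
    simpa [hProw e he, hPcol e he] using exists_marginals_eq_sum_abs_sub_le (hP₀ e he) hr₀ hc₀
      (hr₁.trans (hPmass e he).symm) (hc₁.trans (hPmass e he).symm)
  choose! Q hQ₀ hQrow hQcol hQcost using hrepair
  refine ⟨(Γ.1, Q), ⟨hΓ₀, hΓ₁, hQ₀, hQrow, hQcol, fun e he => ?_⟩, ?_⟩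
  · simpa only [hQrow e he] using (hsimplex e he).1.2
  · calc mvL1 E (Γ - (Γ.1, Q)) = ∑ e ∈ E, ∑ x, ∑ y, |Γ.2 e x y - Q e x y| :=
          mvL1_sub_of_fst_eq E rfl
      _ ≤ slkL1 E (ν - ν') := sum_le_sum hQcost
      _ ≤ 2 * slkL1 E (ν - ν') := by linarith [slkL1_nonneg E (ν - ν')]

/-- Moving from the slack polytope `𝕃₂^ν` to `𝕃₂^{ν'}`,
assuming the perturbed vertex marginals remain in the simplex, can be done
within `l₁` distance `2‖ν − ν'‖₁`. -/
theorem stmt_12 {V : Type} [Fintype V] [DecidableEq V] {d : ℕ} (hd : 1 ≤ d)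
    (E : Finset (V × V))
    (hcover : ∀ i : V, ∃ e ∈ E, e.1 = i ∨ e.2 = i)
    (ν ν' : Slk V d) (hν : isSlack E ν) (hν' : isSlack E ν')
    (hinf : ∀ e ∈ E, ∀ x : Fin d,
      |ν'.1 e x| ≤ 1 / (2 * d) ∧ |ν'.2 e x| ≤ 1 / (2 * d))
    (Γ : MV V d) (hΓ : memSL2 E ν Γ)
    (hsimplex : ∀ e ∈ E,
      ((∀ x, 0 ≤ Γ.1 e.1 x + ν'.1 e x) ∧ (∑ x, (Γ.1 e.1 x + ν'.1 e x)) = 1) ∧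
      ((∀ y, 0 ≤ Γ.1 e.2 y + ν'.2 e y) ∧ (∑ y, (Γ.1 e.2 y + ν'.2 e y)) = 1)) :
    ∃ Γ' : MV V d, memSL2 E ν' Γ' ∧
      mvL1 E (Γ - Γ') ≤ 2 * slkL1 E (ν - ν') :=
  stmt_12_general E ν ν' Γ hΓ hsimplex
end
end

section
/- Let ν' be a slack vector with ‖ν'‖_∞ ≤ 1/(2d), and let Γ ∈ 𝕃₂ (i.e., Γ ∈ 𝕃₂^ν with ν = 0). Then there exists a marginal vector Γ' ∈ 𝕃₂^{ν'} such that ‖Γ − Γ'‖₁ ≤ 6·d·deg(G)·‖ν'‖₁. -/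
/-!
Shrink each vertex marginal to `(1 - s_i) Γ_i + λ_i`, where `λ_i ≥ 0` has mass
`s_i = min 1 (slack incident to i)` and dominates `|ν'|` entrywise at `i`; then `λ_i + ν'_{ij}` is
again nonnegative of mass `s_i`. On an edge, keep `Γ_{ij}` with weight `(1 - s_i)(1 - s_j)` and
complete it by product couplings to the marginals `(1 - s_i) Γ_i + λ_i + ν'_{ij}` and
`(1 - s_j) Γ_j + λ_j + ν'_{ji}`. A vertex then moves by at most `2 s_i` and an edge by at most
`2 (s_i + s_j)` in `ℓ₁`; summing over edge endpoints costs a factor `deg(G)`, and `∑ s_i ≤ ‖ν'‖₁`.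
-/

noncomputable section

open Finset

section Mixing

variable {α β : Type*}

theorem abs_sub_mul_add_le {a c r : ℝ} (ha : 0 ≤ a) (hc : c ≤ 1) (hr : 0 ≤ r) :
    |a - (c * a + r)| ≤ (1 - c) * a + r := by
  have : 0 ≤ (1 - c) * a := mul_nonneg (sub_nonneg.2 hc) ha
  rw [abs_le]
  constructor <;> linarith

theorem sum_abs_sub_shrink_le [Fintype α] {p μ : α → ℝ} {s : ℝ} (hp : ∀ x, 0 ≤ p x)
    (hp1 : ∑ x, p x = 1) (hs : 0 ≤ s) (hμ : ∀ x, 0 ≤ μ x) (hμs : ∑ x, μ x = s) :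
    ∑ x, |p x - ((1 - s) * p x + μ x)| ≤ 2 * s := by
  calc ∑ x, |p x - ((1 - s) * p x + μ x)| ≤ ∑ x, ((1 - (1 - s)) * p x + μ x) :=
        sum_le_sum fun x _ => abs_sub_mul_add_le (hp x) (by linarith) (hμ x)
    _ = 2 * s := by rw [sum_add_distrib, ← mul_sum, hp1, hμs]; ring

/- The coupling `C` of `p` and `q`, kept with weight `(1 - s) * (1 - t)` and completed by two
product couplings so that its marginals become `(1 - s) • p + μ` and `(1 - t) • q + ρ`. -/
def mixCoupling (C : α → β → ℝ) (p : α → ℝ) (q : β → ℝ) (s t : ℝ) (μ : α → ℝ) (ρ : β → ℝ)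
    (x : α) (y : β) : ℝ :=
  (1 - s) * (1 - t) * C x y + ((1 - s) * p x + μ x) * ρ y + μ x * ((1 - t) * q y)

variable {C : α → β → ℝ} {p : α → ℝ} {q : β → ℝ} {s t : ℝ} {μ : α → ℝ} {ρ : β → ℝ}

theorem mixCoupling_nonneg (hC : ∀ x y, 0 ≤ C x y) (hp : ∀ x, 0 ≤ p x) (hq : ∀ y, 0 ≤ q y)
    (hs : s ≤ 1) (ht : t ≤ 1) (hμ : ∀ x, 0 ≤ μ x) (hρ : ∀ y, 0 ≤ ρ y) (x : α) (y : β) :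
    0 ≤ mixCoupling C p q s t μ ρ x y := by
  have hs' : 0 ≤ 1 - s := sub_nonneg.2 hs
  have ht' : 0 ≤ 1 - t := sub_nonneg.2 ht
  unfold mixCoupling
  have := hC x y; have := hp x; have := hq y; have := hμ x; have := hρ y
  positivity

theorem sum_mixCoupling_right [Fintype β] (hC : ∀ x, ∑ y, C x y = p x) (hq : ∑ y, q y = 1)
    (hρ : ∑ y, ρ y = t) (x : α) :
    ∑ y, mixCoupling C p q s t μ ρ x y = (1 - s) * p x + μ x := by
  simp only [mixCoupling, sum_add_distrib, ← mul_sum, hC, hq, hρ]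
  ring

theorem sum_mixCoupling_left [Fintype α] (hC : ∀ y, ∑ x, C x y = q y) (hp : ∑ x, p x = 1)
    (hμ : ∑ x, μ x = s) (y : β) :
    ∑ x, mixCoupling C p q s t μ ρ x y = (1 - t) * q y + ρ y := by
  simp only [mixCoupling, sum_add_distrib, ← mul_sum, ← sum_mul, hC, hp, hμ]
  ring

theorem sum_abs_sub_mixCoupling_le [Fintype α] [Fintype β] (hC : ∀ x y, 0 ≤ C x y)
    (hrow : ∀ x, ∑ y, C x y = p x) (hp : ∀ x, 0 ≤ p x) (hp1 : ∑ x, p x = 1)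
    (hq : ∀ y, 0 ≤ q y) (hq1 : ∑ y, q y = 1)
    (hs0 : 0 ≤ s) (hs1 : s ≤ 1) (ht0 : 0 ≤ t) (ht1 : t ≤ 1)
    (hμ : ∀ x, 0 ≤ μ x) (hμs : ∑ x, μ x = s) (hρ : ∀ y, 0 ≤ ρ y) (hρt : ∑ y, ρ y = t) :
    ∑ x, ∑ y, |C x y - mixCoupling C p q s t μ ρ x y| ≤ 2 * (s + t) := by
  set c := (1 - s) * (1 - t)
  have hc : c ≤ 1 := by nlinarith
  have hrest : ∀ x y, 0 ≤ mixCoupling C p q s t μ ρ x y - c * C x y := by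
    intro x y
    have := hp x; have := hq y; have := hμ x; have := hρ y
    have : 0 ≤ 1 - s := sub_nonneg.2 hs1
    have : 0 ≤ 1 - t := sub_nonneg.2 ht1
    rw [mixCoupling, add_assoc, add_sub_cancel_left]
    positivity
  have hCmass : ∑ x, ∑ y, C x y = 1 := by simp only [hrow, hp1]
  have hmass : ∑ x, ∑ y, mixCoupling C p q s t μ ρ x y = 1 := by
    simp only [sum_mixCoupling_right hrow hq1 hρt, sum_add_distrib, ← mul_sum, hp1, hμs]
    ring
  calc ∑ x, ∑ y, |C x y - mixCoupling C p q s t μ ρ x y|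
      ≤ ∑ x, ∑ y, ((1 - c) * C x y + (mixCoupling C p q s t μ ρ x y - c * C x y)) := by
        gcongr with x _ y _
        simpa only [add_sub_cancel] using abs_sub_mul_add_le (hC x y) hc (hrest x y)
    _ = 2 * (1 - c) := by
        simp only [sum_add_distrib, sum_sub_distrib, ← mul_sum, hCmass, hmass]
        ring
    _ ≤ 2 * (s + t) := by nlinarith

end Mixing

section Degree

variable {V : Type} [Fintype V] [DecidableEq V] (E : Finset (V × V))

theorem card_filter_le_degG {g : V × V → V} (hg : ∀ e, e.1 = g e ∨ e.2 = g e) (i : V) :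
    #(E.filter fun e => g e = i) ≤ degG E := by
  refine (card_le_card fun e he => ?_).trans (le_sup (f := fun i : V =>
    #(E.filter fun e => e.1 = i ∨ e.2 = i)) (mem_univ i))
  obtain ⟨heE, rfl⟩ := mem_filter.1 he
  exact mem_filter.2 ⟨heE, hg e⟩

theorem sum_comp_le_degG_mul {g : V × V → V} (hg : ∀ e, e.1 = g e ∨ e.2 = g e) {f : V → ℝ}
    (hf : ∀ i, 0 ≤ f i) : ∑ e ∈ E, f (g e) ≤ degG E * ∑ i, f i := by
  rw [← sum_fiberwise E g, mul_sum]
  refine sum_le_sum fun i _ => ?_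
  calc ∑ e ∈ E with g e = i, f (g e) = #(E.filter fun e => g e = i) * f i := by
        rw [sum_congr rfl fun e he => by rw [(mem_filter.1 he).2], sum_const, nsmul_eq_mul]
    _ ≤ degG E * f i := by
        gcongr
        · exact hf i
        · exact_mod_cast card_filter_le_degG E hg i

theorem one_le_degG {e : V × V} (he : e ∈ E) : 1 ≤ degG E := by
  refine le_trans ?_ (card_filter_le_degG E (g := Prod.fst) (fun _ => Or.inl rfl) e.1)
  exact card_pos.2 ⟨e, mem_filter.2 ⟨he, rfl⟩⟩

end Degree

section Slack

variable {V : Type} [DecidableEq V] {d : ℕ} (E : Finset (V × V)) (ν : Slk V d)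

def incidentSlack (i : V) (x : Fin d) : ℝ :=
  ∑ e ∈ E, ((if e.1 = i then |ν.1 e x| else 0) + (if e.2 = i then |ν.2 e x| else 0))

def incidentSlackMass (i : V) : ℝ :=
  ∑ x, incidentSlack E ν i x

def mixWeight (i : V) : ℝ :=
  min 1 (incidentSlackMass E ν i)

/- A vector of mass `mixWeight` dominating `|ν|` entrywise at `i`: the incident slack itself
when its mass is at most `1`, and otherwise the uniform vector, which works since
`‖ν‖_∞ ≤ 1 / (2 * d)`. -/
def mixDist (i : V) (x : Fin d) : ℝ :=
  if incidentSlackMass E ν i ≤ 1 then incidentSlack E ν i x else 1 / d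

theorem incidentSlack_nonneg (i : V) (x : Fin d) : 0 ≤ incidentSlack E ν i x :=
  sum_nonneg fun _ _ => by positivity

theorem incidentSlackMass_nonneg (i : V) : 0 ≤ incidentSlackMass E ν i :=
  sum_nonneg fun x _ => incidentSlack_nonneg E ν i x

theorem sum_incidentSlackMass [Fintype V] : ∑ i, incidentSlackMass E ν i = slkL1 E ν := by
  simp only [incidentSlackMass, incidentSlack, slkL1]
  calc _ = ∑ x, ∑ e ∈ E, (|ν.1 e x| + |ν.2 e x|) := by
        rw [sum_comm]
        refine sum_congr rfl fun x _ => ?_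
        rw [sum_comm]
        simp only [sum_add_distrib, sum_ite_eq, mem_univ, if_true]
    _ = _ := by rw [sum_comm]; simp only [sum_add_distrib]

theorem mixWeight_nonneg (i : V) : 0 ≤ mixWeight E ν i :=
  le_min zero_le_one (incidentSlackMass_nonneg E ν i)

theorem mixWeight_le_one (i : V) : mixWeight E ν i ≤ 1 :=
  min_le_left _ _

theorem sum_mixWeight_le [Fintype V] : ∑ i, mixWeight E ν i ≤ slkL1 E ν :=
  sum_incidentSlackMass E ν ▸ sum_le_sum fun _ _ => min_le_right _ _

theorem mixDist_nonneg (i : V) (x : Fin d) : 0 ≤ mixDist E ν i x := by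
  unfold mixDist
  split_ifs
  · exact incidentSlack_nonneg E ν i x
  · positivity

theorem sum_mixDist (hd : 0 < d) (i : V) : ∑ x, mixDist E ν i x = mixWeight E ν i := by
  unfold mixDist mixWeight
  split_ifs with h
  · rw [min_eq_right h, incidentSlackMass]
  · rw [min_eq_left (le_of_not_ge h), sum_const, card_univ, Fintype.card_fin, nsmul_eq_mul,
      mul_one_div_cancel (by positivity)]

theorem abs_fst_le_incidentSlack {e : V × V} (he : e ∈ E) (x : Fin d) :
    |ν.1 e x| ≤ incidentSlack E ν e.1 x := by
  refine le_trans ?_ (single_le_sum (f := fun e' => (if e'.1 = e.1 then |ν.1 e' x| else 0) +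
    (if e'.2 = e.1 then |ν.2 e' x| else 0)) (fun _ _ => by positivity) he)
  rw [if_pos rfl]
  exact le_add_of_nonneg_right (by positivity)

theorem abs_snd_le_incidentSlack {e : V × V} (he : e ∈ E) (x : Fin d) :
    |ν.2 e x| ≤ incidentSlack E ν e.2 x := by
  refine le_trans ?_ (single_le_sum (f := fun e' => (if e'.1 = e.2 then |ν.1 e' x| else 0) +
    (if e'.2 = e.2 then |ν.2 e' x| else 0)) (fun _ _ => by positivity) he)
  rw [if_pos rfl]
  exact le_add_of_nonneg_left (by positivity)

theorem le_mixDist_of_le_incidentSlack (hd : 0 < d) {i : V} {x : Fin d} {a : ℝ}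
    (hL : a ≤ incidentSlack E ν i x) (hinf : a ≤ 1 / (2 * d)) : a ≤ mixDist E ν i x := by
  unfold mixDist
  split_ifs
  · exact hL
  · exact hinf.trans (one_div_le_one_div_of_le (by positivity) (by linarith))

end Slack

section Shift

variable {V : Type} [DecidableEq V] {d : ℕ} (E : Finset (V × V)) (ν : Slk V d)

def slackShift (Γ : MV V d) : MV V d :=
  (fun i x => (1 - mixWeight E ν i) * Γ.1 i x + mixDist E ν i x,
   fun e => mixCoupling (Γ.2 e) (Γ.1 e.1) (Γ.1 e.2) (mixWeight E ν e.1) (mixWeight E ν e.2)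
     (fun x => mixDist E ν e.1 x + ν.1 e x) (fun y => mixDist E ν e.2 y + ν.2 e y))

variable {E ν}

theorem mixDist_add_fst_nonneg (hd : 0 < d)
    (hinf : ∀ e ∈ E, ∀ x : Fin d, |ν.1 e x| ≤ 1 / (2 * d) ∧ |ν.2 e x| ≤ 1 / (2 * d))
    {e : V × V} (he : e ∈ E) (x : Fin d) : 0 ≤ mixDist E ν e.1 x + ν.1 e x := by
  have := le_mixDist_of_le_incidentSlack E ν hd (abs_fst_le_incidentSlack E ν he x)
    (hinf e he x).1
  linarith [neg_abs_le (ν.1 e x)]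

theorem mixDist_add_snd_nonneg (hd : 0 < d)
    (hinf : ∀ e ∈ E, ∀ x : Fin d, |ν.1 e x| ≤ 1 / (2 * d) ∧ |ν.2 e x| ≤ 1 / (2 * d))
    {e : V × V} (he : e ∈ E) (x : Fin d) : 0 ≤ mixDist E ν e.2 x + ν.2 e x := by
  have := le_mixDist_of_le_incidentSlack E ν hd (abs_snd_le_incidentSlack E ν he x)
    (hinf e he x).2
  linarith [neg_abs_le (ν.2 e x)]

theorem sum_mixDist_add_fst (hd : 0 < d) (hν : isSlack E ν) {e : V × V} (he : e ∈ E) :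
    ∑ x, (mixDist E ν e.1 x + ν.1 e x) = mixWeight E ν e.1 := by
  rw [sum_add_distrib, sum_mixDist E ν hd, (hν e he).1, add_zero]

theorem sum_mixDist_add_snd (hd : 0 < d) (hν : isSlack E ν) {e : V × V} (he : e ∈ E) :
    ∑ x, (mixDist E ν e.2 x + ν.2 e x) = mixWeight E ν e.2 := by
  rw [sum_add_distrib, sum_mixDist E ν hd, (hν e he).2, add_zero]

variable [Fintype V]

theorem memSL2_slackShift (hd : 0 < d) (hν : isSlack E ν)
    (hinf : ∀ e ∈ E, ∀ x : Fin d, |ν.1 e x| ≤ 1 / (2 * d) ∧ |ν.2 e x| ≤ 1 / (2 * d))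
    {Γ : MV V d} (hΓ : memSL2 E 0 Γ) : memSL2 E ν (slackShift E ν Γ) := by
  obtain ⟨hΓ1, hΓsum, hΓ2, hrow, hcol, -⟩ := hΓ
  simp only [Prod.fst_zero, Prod.snd_zero, Pi.zero_apply, add_zero] at hrow hcol
  have hsum : ∀ i, ∑ x, (slackShift E ν Γ).1 i x = 1 := fun i => by
    simp only [slackShift, sum_add_distrib, ← mul_sum, hΓsum, sum_mixDist E ν hd]
    ring
  have hrow' : ∀ e ∈ E, ∀ x,
      ∑ y, (slackShift E ν Γ).2 e x y = (slackShift E ν Γ).1 e.1 x + ν.1 e x := by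
    intro e he x
    simp only [slackShift]
    rw [sum_mixCoupling_right (hrow e he) (hΓsum e.2) (sum_mixDist_add_snd hd hν he)]
    ring
  refine ⟨fun i x => ?_, hsum, fun e he x y => ?_, hrow', fun e he y => ?_, fun e he => ?_⟩
  · exact add_nonneg (mul_nonneg (sub_nonneg.2 (mixWeight_le_one E ν i)) (hΓ1 i x))
      (mixDist_nonneg E ν i x)
  · exact mixCoupling_nonneg (hΓ2 e he) (hΓ1 e.1) (hΓ1 e.2) (mixWeight_le_one E ν _)
      (mixWeight_le_one E ν _) (mixDist_add_fst_nonneg hd hinf he)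
      (mixDist_add_snd_nonneg hd hinf he) x y
  · simp only [slackShift]
    rw [sum_mixCoupling_left (hcol e he) (hΓsum e.1) (sum_mixDist_add_fst hd hν he)]
    ring
  · rw [sum_congr rfl fun x _ => hrow' e he x, sum_add_distrib, hsum, (hν e he).1, add_zero]

theorem mvL1_sub_slackShift_le (hd : 0 < d) (hν : isSlack E ν)
    (hinf : ∀ e ∈ E, ∀ x : Fin d, |ν.1 e x| ≤ 1 / (2 * d) ∧ |ν.2 e x| ≤ 1 / (2 * d))
    {Γ : MV V d} (hΓ : memSL2 E 0 Γ) :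
    mvL1 E (Γ - slackShift E ν Γ) ≤ (2 + 4 * degG E) * slkL1 E ν := by
  obtain ⟨hΓ1, hΓsum, hΓ2, hrow, -, -⟩ := hΓ
  simp only [Prod.fst_zero, Pi.zero_apply, add_zero] at hrow
  have hfst := sum_comp_le_degG_mul E (g := Prod.fst) (fun _ => Or.inl rfl) (mixWeight_nonneg E ν)
  have hsnd := sum_comp_le_degG_mul E (g := Prod.snd) (fun _ => Or.inr rfl) (mixWeight_nonneg E ν)
  have hmass := mul_le_mul_of_nonneg_left (sum_mixWeight_le E ν)
    (by positivity : (0 : ℝ) ≤ 2 + 4 * degG E)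
  set s := mixWeight E ν
  have hvertex : ∀ i, ∑ x, |Γ.1 i x - (slackShift E ν Γ).1 i x| ≤ 2 * s i := fun i =>
    sum_abs_sub_shrink_le (hΓ1 i) (hΓsum i) (mixWeight_nonneg E ν i) (mixDist_nonneg E ν i)
      (sum_mixDist E ν hd i)
  have hedge : ∀ e ∈ E,
      ∑ x, ∑ y, |Γ.2 e x y - (slackShift E ν Γ).2 e x y| ≤ 2 * (s e.1 + s e.2) := fun e he =>
    sum_abs_sub_mixCoupling_le (hΓ2 e he) (hrow e he) (hΓ1 e.1) (hΓsum e.1) (hΓ1 e.2)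
      (hΓsum e.2) (mixWeight_nonneg E ν _) (mixWeight_le_one E ν _) (mixWeight_nonneg E ν _)
      (mixWeight_le_one E ν _) (mixDist_add_fst_nonneg hd hinf he) (sum_mixDist_add_fst hd hν he)
      (mixDist_add_snd_nonneg hd hinf he) (sum_mixDist_add_snd hd hν he)
  calc mvL1 E (Γ - slackShift E ν Γ)
      = ∑ i, ∑ x, |Γ.1 i x - (slackShift E ν Γ).1 i x|
        + ∑ e ∈ E, ∑ x, ∑ y, |Γ.2 e x y - (slackShift E ν Γ).2 e x y| := rfl
    _ ≤ ∑ i, 2 * s i + ∑ e ∈ E, 2 * (s e.1 + s e.2) :=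
        add_le_add (sum_le_sum fun i _ => hvertex i) (sum_le_sum hedge)
    _ = 2 * ∑ i, s i + 2 * (∑ e ∈ E, s e.1 + ∑ e ∈ E, s e.2) := by
        rw [← mul_sum, ← mul_sum, sum_add_distrib]
    _ ≤ (2 + 4 * degG E) * slkL1 E ν := by linarith

end Shift

theorem stmt_13_general {V : Type} [Fintype V] [DecidableEq V] {d : ℕ} (hd : 1 ≤ d)
    (E : Finset (V × V))
    (ν' : Slk V d) (hν' : isSlack E ν')
    (hinf : ∀ e ∈ E, ∀ x : Fin d,
      |ν'.1 e x| ≤ 1 / (2 * d) ∧ |ν'.2 e x| ≤ 1 / (2 * d))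
    (Γ : MV V d) (hΓ : memSL2 E (0 : Slk V d) Γ) :
    ∃ Γ' : MV V d, memSL2 E ν' Γ' ∧
      mvL1 E (Γ - Γ') ≤ 6 * d * degG E * slkL1 E ν' := by
  refine ⟨slackShift E ν' Γ, memSL2_slackShift hd hν' hinf hΓ,
    (mvL1_sub_slackShift_le hd hν' hinf hΓ).trans ?_⟩
  rcases E.eq_empty_or_nonempty with rfl | ⟨e, he⟩
  · simp [slkL1]
  · have hS : 0 ≤ slkL1 E ν' := sum_nonneg fun _ _ => by positivity
    have hdeg : (1 : ℝ) ≤ degG E := by exact_mod_cast one_le_degG E he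
    have hd' : (1 : ℝ) ≤ d := by exact_mod_cast hd
    nlinarith [mul_nonneg (mul_nonneg (by linarith : (0 : ℝ) ≤ degG E) (sub_nonneg.2 hd')) hS,
      mul_nonneg (sub_nonneg.2 hdeg) hS]

/-- Moving from the local polytope `𝕃₂ = 𝕃₂^0` to the slack
polytope `𝕃₂^{ν'}` can be done within `l₁` distance `6·d·deg(G)·‖ν'‖₁`. -/
theorem stmt_13 {V : Type} [Fintype V] [DecidableEq V] {d : ℕ} (hd : 1 ≤ d)
    (E : Finset (V × V))
    (hcover : ∀ i : V, ∃ e ∈ E, e.1 = i ∨ e.2 = i)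
    (ν' : Slk V d) (hν' : isSlack E ν')
    (hinf : ∀ e ∈ E, ∀ x : Fin d,
      |ν'.1 e x| ≤ 1 / (2 * d) ∧ |ν'.2 e x| ≤ 1 / (2 * d))
    (Γ : MV V d) (hΓ : memSL2 E (0 : Slk V d) Γ) :
    ∃ Γ' : MV V d, memSL2 E ν' Γ' ∧
      mvL1 E (Γ - Γ') ≤ 6 * d * degG E * slkL1 E ν' :=
  stmt_13_general hd E ν' hν' hinf Γ hΓ
end
end

section
/- Fix τ with 0 < τ ≤ 1/(8d²) and a slack vector ν with ‖ν‖_∞ ≤ 1/(4d). If Γ ∈ 𝕃₂^ν, then there exists a marginal vector Γ' ∈ 𝕃₂ such that Γ'_i(x_i) ≥ τ for all i∈V and x_i∈χ, Γ'_{ij}(x_i,x_j) ≥ τ for all ij∈E and x_i,x_j∈χ, and ‖Γ − Γ'‖₁ ≤ 2‖ν‖₁ + 2(|E|+n)d²τ. -/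
noncomputable section

/-!
Each edge matrix `Γ_{ij}` is first rounded to a coupling of `Γ_i` and `Γ_j`: shrink every row and
every column whose mass exceeds its target marginal, then redistribute the lost mass as the
(normalised) outer product of the row and column deficits. The mass lost is at most the marginal
error, so the rounding moves `Γ_{ij}` by at most `2(‖ν_{ij}‖₁ + ‖ν_{ji}‖₁)` in `ℓ¹`. Since `𝕃₂`
is convex, mixing the rounded vector `Γ₀` with the uniform marginal vector `U` with weight `d²τ`
pushes every entry above `τ`, at an additional cost of at most `d²τ (‖Γ₀‖₁ + ‖U‖₁)`, which is
`2(|E| + n)d²τ` since every point of `𝕃₂` has `ℓ¹`-norm `|E| + n`.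
-/

open Finset

section Coupling

variable {ι κ : Type*} [Fintype ι] [Fintype κ]

noncomputable def capRatio (t s : ℝ) : ℝ := min 1 (t / s)

lemma capRatio_nonneg {t s : ℝ} (ht : 0 ≤ t) (hs : 0 ≤ s) : 0 ≤ capRatio t s :=
  le_min zero_le_one (div_nonneg ht hs)

lemma capRatio_le_one (t s : ℝ) : capRatio t s ≤ 1 := min_le_left _ _

lemma capRatio_mul_le {t s : ℝ} (ht : 0 ≤ t) (hs : 0 ≤ s) : capRatio t s * s ≤ t := by
  rcases hs.eq_or_lt with rfl | hs
  · simpa using ht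
  · calc capRatio t s * s ≤ t / s * s := mul_le_mul_of_nonneg_right (min_le_right _ _) hs.le
      _ = t := div_mul_cancel₀ t hs.ne'

lemma mul_one_sub_capRatio_le {t s : ℝ} (hs : 0 ≤ s) : s * (1 - capRatio t s) ≤ |s - t| := by
  rcases hs.eq_or_lt with rfl | hs
  · simp
  rcases le_total 1 (t / s) with h | h
  · simp [capRatio, min_eq_left h]
  · rw [capRatio, min_eq_right h, mul_one_sub, mul_div_cancel₀ _ hs.ne']
    exact le_abs_self _

noncomputable def shrinkToMarginals (r : ι → ℝ) (c : κ → ℝ) (A : ι → κ → ℝ) (x : ι) (y : κ) : ℝ :=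
  capRatio (r x) (∑ y', A x y') * capRatio (c y) (∑ x', A x' y) * A x y

section Shrink

variable {r : ι → ℝ} {c : κ → ℝ} {A : ι → κ → ℝ}

lemma shrinkToMarginals_nonneg (hr : ∀ x, 0 ≤ r x) (hc : ∀ y, 0 ≤ c y)
    (hA : ∀ x y, 0 ≤ A x y) (x : ι) (y : κ) : 0 ≤ shrinkToMarginals r c A x y :=
  mul_nonneg (mul_nonneg (capRatio_nonneg (hr x) (sum_nonneg fun y _ => hA x y))
    (capRatio_nonneg (hc y) (sum_nonneg fun x _ => hA x y))) (hA x y)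

lemma sum_shrinkToMarginals_row_le (hr : ∀ x, 0 ≤ r x) (hA : ∀ x y, 0 ≤ A x y) (x : ι) :
    ∑ y, shrinkToMarginals r c A x y ≤ r x := by
  have hrow := sum_nonneg fun y (_ : y ∈ univ) => hA x y
  calc ∑ y, shrinkToMarginals r c A x y ≤ ∑ y, capRatio (r x) (∑ y', A x y') * A x y := by
        refine sum_le_sum fun y _ => mul_le_mul_of_nonneg_right ?_ (hA x y)
        exact mul_le_of_le_one_right (capRatio_nonneg (hr x) hrow) (capRatio_le_one _ _)
    _ = capRatio (r x) (∑ y', A x y') * ∑ y, A x y := (mul_sum _ _ _).symm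
    _ ≤ r x := capRatio_mul_le (hr x) hrow

lemma sum_shrinkToMarginals_col_le (hc : ∀ y, 0 ≤ c y) (hA : ∀ x y, 0 ≤ A x y) (y : κ) :
    ∑ x, shrinkToMarginals r c A x y ≤ c y := by
  have hcol := sum_nonneg fun x (_ : x ∈ univ) => hA x y
  calc ∑ x, shrinkToMarginals r c A x y ≤ ∑ x, capRatio (c y) (∑ x', A x' y) * A x y := by
        refine sum_le_sum fun x _ => mul_le_mul_of_nonneg_right ?_ (hA x y)
        exact mul_le_of_le_one_left (capRatio_nonneg (hc y) hcol) (capRatio_le_one _ _)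
    _ = capRatio (c y) (∑ x', A x' y) * ∑ x, A x y := (mul_sum _ _ _).symm
    _ ≤ c y := capRatio_mul_le (hc y) hcol

lemma shrinkToMarginals_le (hc : ∀ y, 0 ≤ c y) (hA : ∀ x y, 0 ≤ A x y) (x : ι) (y : κ) :
    shrinkToMarginals r c A x y ≤ A x y :=
  mul_le_of_le_one_left (hA x y) <| mul_le_one₀ (capRatio_le_one _ _)
    (capRatio_nonneg (hc y) (sum_nonneg fun x _ => hA x y)) (capRatio_le_one _ _)

lemma sum_sub_shrinkToMarginals_le (hA : ∀ x y, 0 ≤ A x y) :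
    ∑ x, ∑ y, (A x y - shrinkToMarginals r c A x y) ≤
      ∑ x, |∑ y, A x y - r x| + ∑ y, |∑ x, A x y - c y| := by
  set α := fun x => capRatio (r x) (∑ y', A x y')
  set β := fun y => capRatio (c y) (∑ x', A x' y)
  have hpoint : ∀ x y, A x y - shrinkToMarginals r c A x y ≤
      A x y * (1 - α x) + A x y * (1 - β y) := fun x y => by
    have h : 0 ≤ A x y * ((1 - α x) * (1 - β y)) :=
      mul_nonneg (hA x y) (mul_nonneg (sub_nonneg.2 (capRatio_le_one _ _))
        (sub_nonneg.2 (capRatio_le_one _ _)))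
    simp only [shrinkToMarginals]
    linarith
  have hrows : ∑ x, ∑ y, A x y * (1 - α x) ≤ ∑ x, |∑ y, A x y - r x| := by
    simp_rw [← sum_mul]
    exact sum_le_sum fun x _ => mul_one_sub_capRatio_le (sum_nonneg fun y _ => hA x y)
  have hcols : ∑ x, ∑ y, A x y * (1 - β y) ≤ ∑ y, |∑ x, A x y - c y| := by
    rw [sum_comm]
    simp_rw [← sum_mul]
    exact sum_le_sum fun y _ => mul_one_sub_capRatio_le (sum_nonneg fun x _ => hA x y)
  calc ∑ x, ∑ y, (A x y - shrinkToMarginals r c A x y)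
      ≤ ∑ x, ∑ y, (A x y * (1 - α x) + A x y * (1 - β y)) :=
        sum_le_sum fun x _ => sum_le_sum fun y _ => hpoint x y
    _ ≤ _ := by simp only [sum_add_distrib]; linarith

end Shrink

lemma mul_sum_div_sum_of_nonneg {p : ι → ℝ} (hp : ∀ x, 0 ≤ p x) (x : ι) :
    p x * (∑ x', p x') / ∑ x', p x' = p x := by
  rcases eq_or_ne (∑ x', p x') 0 with h | h
  · rw [(sum_eq_zero_iff_of_nonneg fun x _ => hp x).1 h x (mem_univ x)]
    simp
  · exact mul_div_cancel_right₀ _ h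

-- If the total deficit vanishes, so does every deficit, and the junk value `_ / 0 = 0` is harmless.
noncomputable def fillMarginals (r : ι → ℝ) (c : κ → ℝ) (S : ι → κ → ℝ) (x : ι) (y : κ) : ℝ :=
  S x y + (r x - ∑ y', S x y') * (c y - ∑ x', S x' y) / ∑ x', (r x' - ∑ y', S x' y')

section Fill

variable {r : ι → ℝ} {c : κ → ℝ} {S : ι → κ → ℝ}

lemma sum_col_deficit_eq (hrc : ∑ x, r x = ∑ y, c y) :
    ∑ y, (c y - ∑ x, S x y) = ∑ x, (r x - ∑ y, S x y) := by
  rw [sum_sub_distrib, sum_sub_distrib, sum_comm, hrc]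

lemma le_fillMarginals (hrow : ∀ x, ∑ y, S x y ≤ r x) (hcol : ∀ y, ∑ x, S x y ≤ c y)
    (x : ι) (y : κ) : S x y ≤ fillMarginals r c S x y :=
  le_add_of_nonneg_right <| div_nonneg
    (mul_nonneg (sub_nonneg.2 (hrow x)) (sub_nonneg.2 (hcol y)))
    (sum_nonneg fun x _ => sub_nonneg.2 (hrow x))

lemma sum_fillMarginals_row (hrow : ∀ x, ∑ y, S x y ≤ r x) (hrc : ∑ x, r x = ∑ y, c y)
    (x : ι) : ∑ y, fillMarginals r c S x y = r x := by
  simp only [fillMarginals, sum_add_distrib, ← sum_div, ← mul_sum, sum_col_deficit_eq hrc,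
    mul_sum_div_sum_of_nonneg (fun x => sub_nonneg.2 (hrow x))]
  ring

lemma sum_fillMarginals_col (hcol : ∀ y, ∑ x, S x y ≤ c y) (hrc : ∑ x, r x = ∑ y, c y)
    (y : κ) : ∑ x, fillMarginals r c S x y = c y := by
  have hq := mul_sum_div_sum_of_nonneg (fun y => sub_nonneg.2 (hcol y)) y
  rw [mul_comm, sum_col_deficit_eq hrc] at hq
  simp only [fillMarginals, sum_add_distrib, ← sum_div, ← sum_mul, hq]
  ring

end Fill

noncomputable def roundToMarginals (r : ι → ℝ) (c : κ → ℝ) (A : ι → κ → ℝ) : ι → κ → ℝ :=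
  fillMarginals r c (shrinkToMarginals r c A)

section Round

variable {r : ι → ℝ} {c : κ → ℝ} {A : ι → κ → ℝ}

lemma roundToMarginals_nonneg (hr : ∀ x, 0 ≤ r x) (hc : ∀ y, 0 ≤ c y) (hA : ∀ x y, 0 ≤ A x y)
    (x : ι) (y : κ) : 0 ≤ roundToMarginals r c A x y :=
  (shrinkToMarginals_nonneg hr hc hA x y).trans <| le_fillMarginals
    (sum_shrinkToMarginals_row_le hr hA) (sum_shrinkToMarginals_col_le hc hA) x y

lemma sum_roundToMarginals_row (hr : ∀ x, 0 ≤ r x) (hA : ∀ x y, 0 ≤ A x y)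
    (hrc : ∑ x, r x = ∑ y, c y) (x : ι) : ∑ y, roundToMarginals r c A x y = r x :=
  sum_fillMarginals_row (sum_shrinkToMarginals_row_le hr hA) hrc x

lemma sum_roundToMarginals_col (hc : ∀ y, 0 ≤ c y) (hA : ∀ x y, 0 ≤ A x y)
    (hrc : ∑ x, r x = ∑ y, c y) (y : κ) : ∑ x, roundToMarginals r c A x y = c y :=
  sum_fillMarginals_col (sum_shrinkToMarginals_col_le hc hA) hrc y

lemma sum_abs_sub_roundToMarginals_le (hr : ∀ x, 0 ≤ r x) (hc : ∀ y, 0 ≤ c y)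
    (hA : ∀ x y, 0 ≤ A x y) (hrc : ∑ x, r x = ∑ y, c y) (hrA : ∑ x, ∑ y, A x y = ∑ x, r x) :
    ∑ x, ∑ y, |A x y - roundToMarginals r c A x y| ≤
      2 * (∑ x, |∑ y, A x y - r x| + ∑ y, |∑ x, A x y - c y|) := by
  set S := shrinkToMarginals r c A
  have hSA : ∀ x y, S x y ≤ A x y := shrinkToMarginals_le hc hA
  have hS : ∀ x y, S x y ≤ roundToMarginals r c A x y := le_fillMarginals
    (sum_shrinkToMarginals_row_le hr hA) (sum_shrinkToMarginals_col_le hc hA)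
  have hpoint : ∀ x y, |A x y - roundToMarginals r c A x y| ≤
      (A x y - S x y) + (roundToMarginals r c A x y - S x y) := fun x y =>
    abs_sub_le_iff.2 ⟨by linarith [hSA x y, hS x y], by linarith [hSA x y, hS x y]⟩
  have hadded : ∑ x, ∑ y, (roundToMarginals r c A x y - S x y) = ∑ x, ∑ y, (A x y - S x y) := by
    simp only [sum_sub_distrib, sum_roundToMarginals_row hr hA hrc, hrA]
  calc ∑ x, ∑ y, |A x y - roundToMarginals r c A x y|
      ≤ ∑ x, ∑ y, ((A x y - S x y) + (roundToMarginals r c A x y - S x y)) :=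
        sum_le_sum fun x _ => sum_le_sum fun y _ => hpoint x y
    _ = 2 * ∑ x, ∑ y, (A x y - S x y) := by simp only [sum_add_distrib, hadded]; ring
    _ ≤ _ := by gcongr; exact sum_sub_shrinkToMarginals_le hA

end Round

end Coupling

section MarginalVectors

variable {V : Type} [Fintype V] {d : ℕ} {E : Finset (V × V)}

lemma mvL1_add_le (Γ Γ' : MV V d) : mvL1 E (Γ + Γ') ≤ mvL1 E Γ + mvL1 E Γ' := by
  simp only [mvL1, Prod.fst_add, Prod.snd_add, Pi.add_apply]
  have hv : ∑ i, ∑ x, |Γ.1 i x + Γ'.1 i x| ≤ ∑ i, ∑ x, (|Γ.1 i x| + |Γ'.1 i x|) :=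
    sum_le_sum fun i _ => sum_le_sum fun x _ => abs_add_le _ _
  have he : ∑ e ∈ E, ∑ x, ∑ y, |Γ.2 e x y + Γ'.2 e x y| ≤
      ∑ e ∈ E, ∑ x, ∑ y, (|Γ.2 e x y| + |Γ'.2 e x y|) :=
    sum_le_sum fun e _ => sum_le_sum fun x _ => sum_le_sum fun y _ => abs_add_le _ _
  simp only [sum_add_distrib] at hv he
  linarith

lemma mvL1_smul (a : ℝ) (Γ : MV V d) : mvL1 E (a • Γ) = |a| * mvL1 E Γ := by
  simp only [mvL1, Prod.smul_fst, Prod.smul_snd, Pi.smul_apply, smul_eq_mul, abs_mul, mul_add,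
    mul_sum]

lemma mvL1_sub_le (Γ Γ' : MV V d) : mvL1 E (Γ - Γ') ≤ mvL1 E Γ + mvL1 E Γ' := by
  have h := mvL1_add_le (E := E) Γ ((-1 : ℝ) • Γ')
  rwa [mvL1_smul, abs_neg, abs_one, one_mul, neg_one_smul, ← sub_eq_add_neg] at h

lemma mvL1_of_memSL2 {ν : Slk V d} {Γ : MV V d} (hΓ : memSL2 E ν Γ) :
    mvL1 E Γ = Fintype.card V + E.card := by
  obtain ⟨hv, hvs, he, -, -, hes⟩ := hΓ
  have hv' : ∀ i, ∑ x, |Γ.1 i x| = 1 := fun i => by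
    simp only [abs_of_nonneg (hv i _), hvs]
  have he' : ∀ e ∈ E, ∑ x, ∑ y, |Γ.2 e x y| = 1 := fun e h => by
    simp only [abs_of_nonneg (he e h _ _), hes e h]
  simp only [mvL1, hv', sum_congr rfl he', sum_const, card_univ, nsmul_eq_mul, mul_one]

lemma convex_memSL2 (ν : Slk V d) : Convex ℝ {Γ : MV V d | memSL2 E ν Γ} := by
  rintro Γ ⟨hv, hvs, he, hrow, hcol, hes⟩ Γ' ⟨hv', hvs', he', hrow', hcol', hes'⟩ a b ha hb hab
  simp only [Set.mem_ofPred_eq, memSL2, Prod.fst_add, Prod.snd_add, Prod.smul_fst,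
    Prod.smul_snd, Pi.add_apply, Pi.smul_apply, smul_eq_mul, sum_add_distrib, ← mul_sum]
  refine ⟨fun i x => by positivity [hv i x, hv' i x], fun i => ?_,
    fun e h x y => by positivity [he e h x y, he' e h x y], fun e h x => ?_, fun e h y => ?_,
    fun e h => ?_⟩
  · rw [hvs, hvs']; linarith
  · rw [hrow e h, hrow' e h]; linear_combination ν.1 e x * hab
  · rw [hcol e h, hcol' e h]; linear_combination ν.2 e y * hab
  · rw [hes e h, hes' e h]; linarith

noncomputable def uniformMV (V : Type) (d : ℕ) : MV V d :=
  (fun _ _ => 1 / d, fun _ _ _ => 1 / d ^ 2)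

lemma memSL2_uniformMV (hd : d ≠ 0) : memSL2 E 0 (uniformMV V d) := by
  have hd' : (d : ℝ) ≠ 0 := Nat.cast_ne_zero.2 hd
  refine ⟨fun _ _ => by simp [uniformMV], fun _ => ?_, fun _ _ _ _ => by simp [uniformMV],
    fun _ _ _ => ?_, fun _ _ _ => ?_, fun _ _ => ?_⟩ <;>
  · simp [uniformMV]
    field_simp

lemma le_mix_uniformMV {ν : Slk V d} {Γ : MV V d} (hΓ : memSL2 E ν Γ) {l : ℝ} (hl1 : l ≤ 1) :
    (∀ i x, l / d ≤ ((1 - l) • Γ + l • uniformMV V d).1 i x) ∧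
      ∀ e ∈ E, ∀ x y, l / d ^ 2 ≤ ((1 - l) • Γ + l • uniformMV V d).2 e x y := by
  refine ⟨fun i x => ?_, fun e h x y => ?_⟩ <;>
    simp only [Prod.fst_add, Prod.snd_add, Prod.smul_fst, Prod.smul_snd, Pi.add_apply,
      Pi.smul_apply, smul_eq_mul, uniformMV, mul_one_div]
  · have := mul_nonneg (sub_nonneg.2 hl1) (hΓ.1 i x)
    linarith
  · have := mul_nonneg (sub_nonneg.2 hl1) (hΓ.2.2.1 e h x y)
    linarith

noncomputable def roundEdges (Γ : MV V d) : MV V d :=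
  (Γ.1, fun e => roundToMarginals (Γ.1 e.1) (Γ.1 e.2) (Γ.2 e))

lemma memSL2_roundEdges {ν : Slk V d} {Γ : MV V d} (hΓ : memSL2 E ν Γ) :
    memSL2 E 0 (roundEdges Γ) := by
  obtain ⟨hv, hvs, he, -, -, -⟩ := hΓ
  have hrc : ∀ e : V × V, ∑ x, Γ.1 e.1 x = ∑ y, Γ.1 e.2 y := fun e => by rw [hvs, hvs]
  refine ⟨hv, hvs, fun e h x y => roundToMarginals_nonneg (hv _) (hv _) (he e h) x y,
    fun e h x => ?_, fun e h y => ?_, fun e h => ?_⟩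
  · simp [roundEdges, sum_roundToMarginals_row (hv _) (he e h) (hrc e)]
  · simp [roundEdges, sum_roundToMarginals_col (hv _) (he e h) (hrc e)]
  · simp only [roundEdges, sum_roundToMarginals_row (hv _) (he e h) (hrc e), hvs]

lemma mvL1_sub_roundEdges_le {ν : Slk V d} {Γ : MV V d} (hΓ : memSL2 E ν Γ) :
    mvL1 E (Γ - roundEdges Γ) ≤ 2 * slkL1 E ν := by
  obtain ⟨hv, hvs, he, hrow, hcol, hes⟩ := hΓ
  have hedge : ∀ e ∈ E, ∑ x, ∑ y, |Γ.2 e x y - roundToMarginals (Γ.1 e.1) (Γ.1 e.2) (Γ.2 e) x y|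
      ≤ 2 * ((∑ x, |ν.1 e x|) + ∑ x, |ν.2 e x|) := fun e h => by
    simpa [hrow e h, hcol e h] using sum_abs_sub_roundToMarginals_le (hv e.1) (hv e.2) (he e h)
      (by rw [hvs, hvs]) (by rw [hes e h, hvs])
  simpa [mvL1, roundEdges, slkL1, mul_sum] using sum_le_sum hedge

end MarginalVectors

theorem stmt_14_general {V : Type} [Fintype V] {d : ℕ} (hd : 1 ≤ d)
    (E : Finset (V × V))
    (τ : ℝ) (hτ0 : 0 < τ) (hτ : τ ≤ 1 / (8 * d ^ 2))
    (ν : Slk V d)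
    (Γ : MV V d) (hΓ : memSL2 E ν Γ) :
    ∃ Γ' : MV V d, memSL2 E (0 : Slk V d) Γ' ∧
      (∀ i x, τ ≤ Γ'.1 i x) ∧
      (∀ e ∈ E, ∀ x y, τ ≤ Γ'.2 e x y) ∧
      mvL1 E (Γ - Γ') ≤
        2 * slkL1 E ν + 2 * ((E.card : ℝ) + Fintype.card V) * d ^ 2 * τ := by
  have hd1 : (1 : ℝ) ≤ d := Nat.one_le_cast.2 hd
  set l : ℝ := d ^ 2 * τ with hl
  have hl1 : l ≤ 1 := by
    rw [le_div_iff₀ (by positivity)] at hτ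
    linarith
  have hl0 : 0 ≤ l := by positivity
  have h₀ := memSL2_roundEdges hΓ
  have hU := memSL2_uniformMV (E := E) (V := V) (by omega : d ≠ 0)
  obtain ⟨hvert, hedge⟩ := le_mix_uniformMV h₀ hl1
  have hld : l / d ^ 2 = τ := by rw [hl]; field_simp
  have hτld : τ ≤ l / d := by
    rw [hl, pow_two, mul_assoc, mul_div_cancel_left₀ _ (by positivity)]
    nlinarith
  refine ⟨(1 - l) • roundEdges Γ + l • uniformMV V d,
    convex_memSL2 0 h₀ hU (by linarith) hl0 (by ring), fun i x => hτld.trans (hvert i x),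
    fun e he x y => hld ▸ hedge e he x y, ?_⟩
  calc mvL1 E (Γ - ((1 - l) • roundEdges Γ + l • uniformMV V d))
      = mvL1 E ((Γ - roundEdges Γ) + l • (roundEdges Γ - uniformMV V d)) := by
        congr 1; module
    _ ≤ 2 * slkL1 E ν + l * (mvL1 E (roundEdges Γ) + mvL1 E (uniformMV V d)) := by
        grw [mvL1_add_le, mvL1_smul, abs_of_nonneg hl0, mvL1_sub_roundEdges_le hΓ, mvL1_sub_le]
    _ = _ := by rw [mvL1_of_memSL2 h₀, mvL1_of_memSL2 hU]; ring

/-- From `Γ ∈ 𝕃₂^ν` with `‖ν‖_∞ ≤ 1/(4d)` one can find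
`Γ' ∈ 𝕃₂` with all entries at least `τ` and
`‖Γ − Γ'‖₁ ≤ 2‖ν‖₁ + 2(|E|+n)d²τ`. -/
theorem stmt_14 {V : Type} [Fintype V] [DecidableEq V] {d : ℕ} (hd : 1 ≤ d)
    (E : Finset (V × V))
    (hcover : ∀ i : V, ∃ e ∈ E, e.1 = i ∨ e.2 = i)
    (τ : ℝ) (hτ0 : 0 < τ) (hτ : τ ≤ 1 / (8 * d ^ 2))
    (ν : Slk V d) (hν : isSlack E ν)
    (hinf : ∀ e ∈ E, ∀ x : Fin d,
      |ν.1 e x| ≤ 1 / (4 * d) ∧ |ν.2 e x| ≤ 1 / (4 * d))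
    (Γ : MV V d) (hΓ : memSL2 E ν Γ) :
    ∃ Γ' : MV V d, memSL2 E (0 : Slk V d) Γ' ∧
      (∀ i x, τ ≤ Γ'.1 i x) ∧
      (∀ e ∈ E, ∀ x y, τ ≤ Γ'.2 e x y) ∧
      mvL1 E (Γ - Γ') ≤
        2 * slkL1 E ν + 2 * ((E.card : ℝ) + Fintype.card V) * d ^ 2 * τ :=
  stmt_14_general hd E τ hτ0 hτ ν Γ hΓ
end
end
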